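/- arXiv:1811.05811 — 8 statements merged into one kernel-verified Lean document; each statement's English description precedes it below -/
import Mathlib

section
/- For every ε > 0 there exists n₀ such that for all n > n₀ the following holds. Let P(n) be the set of multisets of prime powers (each element a prime power greater than 1) whose product is n, and for m ∈ P(n) let r(m) be the number of elements of m that are powers of 2. Then the number of m ∈ P(n) with 2^{r(m)} > ε·n is at most ε·|P(n)|. -/
/-!
If `2 ^ r(m) > ε n` and `ε 2 ^ c > 1`, then `r(m) > log₂ n - c`. The powers of `2` in `m` other
than `2` itself are at least `4` and their product divides `n`, so such an `m` contains at least
`K = log₂ n + 2 - 2c` copies of `2`. For each `k ∈ [2, K]`, trading `k` copies of `2` for one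
factor `2 ^ k` maps these `m` injectively into `P(n)`; conversely a given `x ∈ P(n)` arises this
way for at most `√(2 log₂ n) + 1` values of `k`, since the distinct exponents `k` with
`2 ^ k ∈ x` sum to at most `log₂ n`. Double counting bounds the proportion of such `m` by
`(√(2 log₂ n) + 1) / (K - 1) → 0`.
-/

open Finset

theorem Finset.card_mul_card_sub_one_le_two_mul_sum (S : Finset ℕ) :
    #S * (#S - 1) ≤ 2 * ∑ i ∈ S, i := by
  induction S using Finset.induction_on_max with
  | empty => simp
  | insert a s ha ih =>
    have ha' : a ∉ s := fun h => lt_irrefl a (ha a h)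
    have hcard : #s ≤ a := by
      simpa using card_le_card fun x hx => mem_range.mpr (ha x hx)
    rw [card_insert_of_notMem ha', sum_insert ha', Nat.add_sub_cancel]
    cases h : #s with
    | zero => simp
    | succ d => rw [h] at ih hcard; simp only [Nat.add_sub_cancel] at ih; nlinarith

theorem Finset.card_le_sqrt_two_mul_sum_add_one (S : Finset ℕ) :
    #S ≤ Nat.sqrt (2 * ∑ i ∈ S, i) + 1 := by
  have h := S.card_mul_card_sub_one_le_two_mul_sum
  have : #S - 1 ≤ Nat.sqrt (2 * ∑ i ∈ S, i) :=
    Nat.le_sqrt'.mpr (le_trans (by rw [sq]; exact Nat.mul_le_mul_right _ (Nat.sub_le _ _)) h)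
  omega

theorem Multiset.pow_two_mul_card_le_prod_mul_pow_count {p : ℕ} {s : Multiset ℕ}
    (hs : ∀ q ∈ s, ∃ j, 1 ≤ j ∧ q = p ^ j) :
    p ^ (2 * Multiset.card s) ≤ s.prod * p ^ s.count p := by
  induction s using Multiset.induction_on with
  | empty => simp
  | cons a s ih =>
    obtain ⟨j, hj, rfl⟩ := hs a (Multiset.mem_cons_self _ _)
    have ih := ih fun q hq => hs q (Multiset.mem_cons_of_mem hq)
    have hpa : p ^ 2 ≤ p ^ j * p ^ (if p = p ^ j then 1 else 0) := by
      split_ifs with h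
      · rw [← h, pow_one, sq]
      · have hj2 : 2 ≤ j := by
          rcases hj.eq_or_lt with rfl | hj
          · exact absurd (pow_one p).symm h
          · exact hj
        rcases Nat.eq_zero_or_pos p with rfl | hp
        · simp
        · simpa using Nat.pow_le_pow_right hp hj2
    calc p ^ (2 * Multiset.card (p ^ j ::ₘ s)) = p ^ 2 * p ^ (2 * Multiset.card s) := by
          rw [Multiset.card_cons, ← pow_add]; ring_nf
      _ ≤ (p ^ j * p ^ (if p = p ^ j then 1 else 0)) * (s.prod * p ^ s.count p) :=
          Nat.mul_le_mul hpa ih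
      _ = _ := by rw [Multiset.prod_cons, Multiset.count_cons]; ring

theorem Multiset.sum_le_log_prod_of_pow_mem {p : ℕ} (hp : 1 < p) {x : Multiset ℕ}
    (hx : x.prod ≠ 0) {S : Finset ℕ} (hS : ∀ k ∈ S, p ^ k ∈ x) :
    ∑ k ∈ S, k ≤ Nat.log p x.prod := by
  have hinj : Set.InjOn (p ^ ·) S := fun _ _ _ _ h => Nat.pow_right_injective hp h
  have hle : (S.image (p ^ ·)).val ≤ x :=
    (Multiset.le_iff_subset (S.image _).nodup).mpr fun y hy => by
      obtain ⟨k, hk, rfl⟩ := mem_image.mp hy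
      exact hS k hk
  have hdvd : p ^ ∑ k ∈ S, k ∣ x.prod := by
    have : ∏ k ∈ S, p ^ k = (S.image (p ^ ·)).val.prod := by
      rw [prod_val, prod_image hinj]; rfl
    rw [← prod_pow_eq_pow_sum, this]
    exact Multiset.prod_dvd_prod_of_le hle
  exact Nat.le_log_of_pow_le hp (Nat.le_of_dvd (Nat.pos_of_ne_zero hx) hdvd)

theorem Multiset.card_le_log_prod {m : Multiset ℕ} (hm : ∀ q ∈ m, 2 ≤ q) :
    Multiset.card m ≤ Nat.log 2 m.prod :=
  Nat.le_log_of_pow_le one_lt_two (Multiset.pow_card_le_prod hm)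

def primePowerFactorizations (n : ℕ) : Set (Multiset ℕ) :=
  {m | (∀ q ∈ m, IsPrimePow q) ∧ m.prod = n}

open Classical in
noncomputable def twoPowerCount (m : Multiset ℕ) : ℕ :=
  Multiset.card (m.filter fun q => ∃ j : ℕ, q = 2 ^ j)

theorem primePowerFactorizations_finite {n : ℕ} (hn : n ≠ 0) :
    (primePowerFactorizations n).Finite := by
  refine (n • n.divisors.val).powerset.toFinset.finite_toSet.subset fun m ⟨hpp, hprod⟩ => ?_
  simp only [mem_coe, Multiset.mem_toFinset, Multiset.mem_powerset, Multiset.le_iff_count]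
  intro a
  by_cases ha : a ∈ m
  · have hcard : Multiset.card m ≤ n := by
      have := Multiset.card_le_log_prod fun q hq => (hpp q hq).two_le
      rw [hprod] at this
      exact this.trans (Nat.log_le_self 2 n)
    rw [Multiset.count_nsmul, Multiset.count_eq_one_of_mem n.divisors.nodup
      (Nat.mem_divisors.mpr ⟨hprod ▸ Multiset.dvd_prod ha, hn⟩), mul_one]
    exact (Multiset.count_le_card a m).trans hcard
  · simp [Multiset.count_eq_zero_of_notMem ha]

open Classical in
theorem two_mul_twoPowerCount_le {n : ℕ} (hn : n ≠ 0) {m : Multiset ℕ}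
    (hm : m ∈ primePowerFactorizations n) :
    2 * twoPowerCount m ≤ Nat.log 2 n + m.count 2 := by
  obtain ⟨hpp, hprod⟩ := hm
  set s := m.filter fun q => ∃ j : ℕ, q = 2 ^ j
  have hs : ∀ q ∈ s, ∃ j, 1 ≤ j ∧ q = 2 ^ j := fun q hq => by
    obtain ⟨hqm, j, rfl⟩ := Multiset.mem_filter.mp hq
    refine ⟨j, Nat.one_le_iff_ne_zero.mpr ?_, rfl⟩
    rintro rfl
    exact not_isPrimePow_one (hpp _ hqm)
  have hcount : s.count 2 = m.count 2 := Multiset.count_filter_of_pos ⟨1, rfl⟩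
  have hsn : s.prod ≤ n := Nat.le_of_dvd (Nat.pos_of_ne_zero hn)
    (hprod ▸ Multiset.prod_dvd_prod_of_le (Multiset.filter_le _ m))
  have : 2 ^ (2 * twoPowerCount m) < 2 ^ (Nat.log 2 n + 1 + m.count 2) := calc
    2 ^ (2 * twoPowerCount m) ≤ s.prod * 2 ^ s.count 2 :=
      Multiset.pow_two_mul_card_le_prod_mul_pow_count hs
    _ < 2 ^ (Nat.log 2 n + 1) * 2 ^ m.count 2 := by
      rw [hcount]
      exact Nat.mul_lt_mul_of_pos_right (hsn.trans_lt (Nat.lt_pow_succ_log_self one_lt_two n))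
        (by positivity)
    _ = _ := (pow_add _ _ _).symm
  have := (Nat.pow_lt_pow_iff_right (by norm_num)).mp this
  omega

def replaceTwos (k : ℕ) (m : Multiset ℕ) : Multiset ℕ :=
  2 ^ k ::ₘ (m - Multiset.replicate k 2)

theorem replaceTwos_mem_primePowerFactorizations {n k : ℕ} {m : Multiset ℕ} (hk : k ≠ 0)
    (hm : m ∈ primePowerFactorizations n) (hkm : k ≤ m.count 2) :
    replaceTwos k m ∈ primePowerFactorizations n := by
  obtain ⟨hpp, hprod⟩ := hm
  have hle := Multiset.le_count_iff_replicate_le.mp hkm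
  refine ⟨fun q hq => ?_, ?_⟩
  · rcases Multiset.mem_cons.mp hq with rfl | hq
    · exact (Nat.prime_two.isPrimePow).pow hk
    · exact hpp q (Multiset.mem_of_le (Multiset.sub_le_self _ _) hq)
  · rw [← hprod, ← tsub_add_cancel_of_le hle, replaceTwos, add_tsub_cancel_right,
      Multiset.prod_cons, Multiset.prod_add, Multiset.prod_replicate, mul_comm]

theorem replaceTwos_injOn (k : ℕ) : Set.InjOn (replaceTwos k) {m | k ≤ m.count 2} := by
  have key : ∀ m ∈ {m : Multiset ℕ | k ≤ m.count 2},
      (replaceTwos k m).erase (2 ^ k) + Multiset.replicate k 2 = m := fun m hm => by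
    rw [replaceTwos, Multiset.erase_cons_head,
      tsub_add_cancel_of_le (Multiset.le_count_iff_replicate_le.mp hm)]
  intro m hm m' hm' h
  rw [← key m hm, ← key m' hm', h]

theorem ncard_mul_sub_one_le_of_le_count_two {n K : ℕ} (hn : n ≠ 0)
    {B : Set (Multiset ℕ)} (hB : B ⊆ primePowerFactorizations n)
    (hK : ∀ m ∈ B, K ≤ m.count 2) :
    B.ncard * (K - 1) ≤
      (primePowerFactorizations n).ncard * (Nat.sqrt (2 * Nat.log 2 n) + 1) := by
  have hT := primePowerFactorizations_finite hn
  have hBfin := hT.subset hB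
  rw [Set.ncard_eq_toFinset_card _ hT, Set.ncard_eq_toFinset_card _ hBfin, mul_comm _ (K - 1),
    show K - 1 = #(Icc 2 K) by simp]
  refine card_mul_le_card_mul (fun k x => 2 ^ k ∈ x) (fun k hk => ?_) (fun x hx => ?_)
  · obtain ⟨hk2, hkK⟩ := mem_Icc.mp hk
    refine card_le_card_of_injOn (replaceTwos k) (fun m hm => ?_)
      ((replaceTwos_injOn k).mono fun m hm => ?_)
    · rw [Set.Finite.coe_toFinset] at hm
      rw [mem_coe, mem_bipartiteAbove, Set.Finite.mem_toFinset]
      exact ⟨replaceTwos_mem_primePowerFactorizations (by omega) (hB hm) (hkK.trans (hK m hm)),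
        Multiset.mem_cons_self _ _⟩
    · rw [Set.Finite.coe_toFinset] at hm
      exact hkK.trans (hK m hm)
  · obtain ⟨-, hprod⟩ := hT.mem_toFinset.mp hx
    have hsum : ∑ k ∈ (Icc 2 K).bipartiteBelow (fun k x => 2 ^ k ∈ x) x, k ≤ Nat.log 2 n :=
      hprod ▸ Multiset.sum_le_log_prod_of_pow_mem one_lt_two (hprod ▸ hn)
        fun k hk => (mem_bipartiteBelow _).mp hk |>.2
    exact (card_le_sqrt_two_mul_sum_add_one _).trans
      (Nat.add_le_add_right (Nat.sqrt_le_sqrt (Nat.mul_le_mul_left 2 hsum)) 1)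

theorem two_mul_mul_sqrt_two_mul_add_one_le (a L : ℕ) :
    2 * (a * (Nat.sqrt (2 * L) + 1)) ≤ 2 * a ^ 2 + 2 * a + L := by
  have hs := Nat.sqrt_le' (2 * L)
  have := two_mul_le_add_sq (2 * a) (Nat.sqrt (2 * L))
  nlinarith

theorem exists_two_pow_mul_ncard_le (c : ℕ) : ∃ n₀ : ℕ, ∀ n > n₀,
    2 ^ c * {m ∈ primePowerFactorizations n | n < 2 ^ (twoPowerCount m + c)}.ncard ≤
      (primePowerFactorizations n).ncard := by
  set A := 2 ^ c
  refine ⟨2 ^ (2 * A ^ 2 + 2 * A + 4 * c), fun n hn => ?_⟩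
  have hn0 : n ≠ 0 := ((Nat.zero_le _).trans_lt hn).ne'
  set L := Nat.log 2 n
  have hL : 2 * A ^ 2 + 2 * A + 4 * c ≤ L := Nat.le_log_of_pow_le one_lt_two hn.le
  set K := L + 2 - 2 * c
  have hcount : ∀ m ∈ {m ∈ primePowerFactorizations n | n < 2 ^ (twoPowerCount m + c)},
      K ≤ m.count 2 := fun m ⟨hm, hlt⟩ => by
    have := two_mul_twoPowerCount_le hn0 hm
    have := Nat.log_lt_of_lt_pow hn0 hlt
    omega
  have hcounting := ncard_mul_sub_one_le_of_le_count_two hn0 (Set.sep_subset _ _) hcount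
  have hsqrt : A * (Nat.sqrt (2 * L) + 1) ≤ K - 1 := by
    have := two_mul_mul_sqrt_two_mul_add_one_le A L
    omega
  have hK : 0 < K - 1 := by omega
  refine Nat.le_of_mul_le_mul_right ?_ hK
  calc _ = A * (_ * (K - 1)) := by ring
    _ ≤ A * ((primePowerFactorizations n).ncard * (Nat.sqrt (2 * L) + 1)) :=
        Nat.mul_le_mul_left A hcounting
    _ = (primePowerFactorizations n).ncard * (A * (Nat.sqrt (2 * L) + 1)) := by ring
    _ ≤ _ := Nat.mul_le_mul_left _ hsqrt

theorem ncard_mul_lt_two_pow_twoPowerCount_le {ε : ℝ} {c n : ℕ} (hεc : 1 < 2 ^ c * ε)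
    (hn : n ≠ 0)
    (h : 2 ^ c * {m ∈ primePowerFactorizations n | n < 2 ^ (twoPowerCount m + c)}.ncard ≤
      (primePowerFactorizations n).ncard) :
    ({m : Multiset ℕ | (∀ q ∈ m, IsPrimePow q) ∧ m.prod = n ∧
        (2 : ℝ) ^ twoPowerCount m > ε * n}.ncard : ℝ) ≤
      ε * (primePowerFactorizations n).ncard := by
  have hε : 0 < ε := pos_of_mul_pos_right (one_pos.trans hεc) (by positivity)
  set B := {m ∈ primePowerFactorizations n | n < 2 ^ (twoPowerCount m + c)}
  set T := primePowerFactorizations n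
  have hsub : {m : Multiset ℕ | (∀ q ∈ m, IsPrimePow q) ∧ m.prod = n ∧
      (2 : ℝ) ^ twoPowerCount m > ε * n} ⊆ B :=
    fun m ⟨hpp, hprod, hbad⟩ => ⟨⟨hpp, hprod⟩, by
      have : (n : ℝ) < 2 ^ (twoPowerCount m + c) := calc
        (n : ℝ) ≤ 2 ^ c * ε * n := le_mul_of_one_le_left n.cast_nonneg hεc.le
        _ = ε * n * 2 ^ c := by ring
        _ < 2 ^ twoPowerCount m * 2 ^ c := by gcongr
        _ = 2 ^ (twoPowerCount m + c) := (pow_add _ _ _).symm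
      exact_mod_cast this⟩
  have hB : (_ : ℝ) ≤ B.ncard := Nat.cast_le.mpr <| Set.ncard_le_ncard hsub
    ((primePowerFactorizations_finite hn).subset (Set.sep_subset _ _))
  have hT : (2 : ℝ) ^ c * B.ncard ≤ T.ncard := by exact_mod_cast h
  calc _ ≤ (B.ncard : ℝ) := hB
    _ ≤ 2 ^ c * ε * B.ncard := le_mul_of_one_le_left (Nat.cast_nonneg _) hεc.le
    _ = ε * (2 ^ c * B.ncard) := by ring
    _ ≤ ε * T.ncard := by gcongr

open Classical in
/-- For every `ε > 0`, for all sufficiently large `n`, among the multisets of prime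
powers with product `n` (which are in bijection with isomorphism classes of abelian
groups of order `n`), the proportion of those `m` whose number `r(m)` of power-of-2
elements satisfies `2 ^ r(m) > ε * n` is at most `ε`. -/
theorem almost_all_abelian_groups_have_few_even_factors :
    ∀ ε : ℝ, ε > 0 → ∃ n₀ : ℕ, ∀ n : ℕ, n > n₀ →
      ({m : Multiset ℕ | (∀ q ∈ m, IsPrimePow q) ∧ m.prod = n ∧
          (2 : ℝ) ^ (Multiset.card (m.filter fun q => ∃ j : ℕ, q = 2 ^ j)) > ε * n}.ncard : ℝ)
        ≤ ε * ({m : Multiset ℕ | (∀ q ∈ m, IsPrimePow q) ∧ m.prod = n}.ncard : ℝ) := by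
  intro ε hε
  obtain ⟨c, hc⟩ : ∃ c : ℕ, ε⁻¹ < 2 ^ c := pow_unbounded_of_one_lt ε⁻¹ one_lt_two
  obtain ⟨n₀, hn₀⟩ := exists_two_pow_mul_ncard_le c
  exact ⟨n₀, fun n hn => ncard_mul_lt_two_pow_twoPowerCount_le
    ((inv_lt_iff_one_lt_mul₀ hε).mp hc) (by omega) (hn₀ n hn)⟩
end

section
/- Let Δ ≥ 1 be an integer, let k be an integer, and let C be a real number with C ≥ 3^{Δ/13}. Let Γ be a finite graph (loops allowed, at most one per vertex) with n vertices, exactly n + k edges, and every vertex of degree at most Δ. Then mis(Γ) ≤ C · 3^{n/3 − k/(13Δ)}. -/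
/-!
Every maximal independent set either avoids a vertex `v` or contains it and avoids its
neighbours, so `mis G ≤ mis (G - v) + mis (G - N[v])`. We prove
`mis G ≤ 3 ^ (n / 3 - (m - n) / (13 Δ))` by induction on `n`. A looped vertex lies in no
independent set and is simply deleted. If the maximum degree `D` is at most `2`, then `m ≤ n`
and the Moon–Moser bound `mis G ≤ 3 ^ (n / 3)` suffices. Otherwise branch on a vertex of degree
`D ≥ 3`: deleting `v` removes at most `D` edges and deleting `N[v]` at most `D²`, and the two
branch weights `3 ^ (-1/3 + (D - 1)/(13Δ))` and `3 ^ (-(D + 1)/3 + (D² - D - 1)/(13Δ))` sum to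
at most `1`.

Moon–Moser itself follows by branching over the closed neighbourhood of a vertex of minimum
degree `d`, using `d + 1 ≤ 3 ^ ((d + 1)/3)`.
-/

/-- The number of maximal independent sets of the graph (possibly with loops) on `V`
whose adjacency relation is `Adj`. A set `I` is independent if `Adj u v` holds for no
`u, v ∈ I` (in particular no vertex of `I` has a loop). -/
noncomputable def graphMIS {V : Type*} (Adj : V → V → Prop) : ℕ :=
  Nat.card {I : Set V // (∀ x ∈ I, ∀ y ∈ I, ¬ Adj x y) ∧
    ∀ J : Set V, (∀ x ∈ J, ∀ y ∈ J, ¬ Adj x y) → I ⊆ J → I = J}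

theorem Nat.pow_three_le_three_pow (k : ℕ) : k ^ 3 ≤ 3 ^ k := by
  induction k with
  | zero => norm_num
  | succ k ih =>
    rcases Nat.lt_or_ge k 3 with hk | hk
    · interval_cases k <;> norm_num
    · have hk2 : 3 * k ≤ k ^ 2 := by nlinarith
      have hk3 : 3 * k ^ 2 ≤ k ^ 3 := by nlinarith
      calc (k + 1) ^ 3 ≤ 3 * k ^ 3 := by nlinarith
        _ ≤ 3 * 3 ^ k := Nat.mul_le_mul_left 3 ih
        _ = 3 ^ (k + 1) := by ring

theorem natCast_le_three_rpow (k : ℕ) : (k : ℝ) ≤ 3 ^ ((k : ℝ) / 3) := by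
  refine le_of_pow_le_pow_left₀ three_ne_zero (by positivity) ?_
  rw [← Real.rpow_natCast (3 ^ _), ← Real.rpow_mul (by norm_num)]
  norm_num
  exact_mod_cast Nat.pow_three_le_three_pow k

theorem rpow_neg_div_le_of_one_le_mul {b a : ℝ} {p q : ℕ} (hb : 0 < b) (ha : 0 ≤ a) (hq : q ≠ 0)
    (h : 1 ≤ b ^ p * a ^ q) : b ^ (-(p : ℝ) / q) ≤ a := by
  refine le_of_pow_le_pow_left₀ hq ha ?_
  rw [← Real.rpow_natCast (b ^ _), ← Real.rpow_mul hb.le, div_mul_cancel₀ _ (by exact_mod_cast hq),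
    Real.rpow_neg hb.le, Real.rpow_natCast, inv_le_iff_one_le_mul₀' (by positivity)]
  exact h

theorem le_rpow_of_le_add {β x a b φ φ₁ φ₂ c₁ c₂ : ℝ} (hβ : 1 ≤ β) (h : x ≤ a + b)
    (ha : a ≤ β ^ φ₁) (hb : b ≤ β ^ φ₂) (h₁ : φ₁ ≤ φ + c₁) (h₂ : φ₂ ≤ φ + c₂)
    (hc : β ^ c₁ + β ^ c₂ ≤ 1) : x ≤ β ^ φ := by
  have hβ₀ : 0 < β := by linarith
  calc x ≤ β ^ (φ + c₁) + β ^ (φ + c₂) :=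
        h.trans (add_le_add (ha.trans (Real.rpow_le_rpow_of_exponent_le hβ h₁))
          (hb.trans (Real.rpow_le_rpow_of_exponent_le hβ h₂)))
    _ = β ^ φ * (β ^ c₁ + β ^ c₂) := by rw [Real.rpow_add hβ₀, Real.rpow_add hβ₀]; ring
    _ ≤ β ^ φ := mul_le_of_le_one_right (by positivity) hc

theorem three_rpow_add_three_rpow_le_one {D Δ : ℕ} (hD : 3 ≤ D) (hDΔ : D ≤ Δ) :
    (3 : ℝ) ^ (-(1 / 3) + ((D : ℝ) - 1) / (13 * Δ)) +
      (3 : ℝ) ^ (-(((D : ℝ) + 1) / 3) + ((D : ℝ) * D - (D + 1)) / (13 * Δ)) ≤ 1 := by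
  have hDΔ' : (D : ℝ) ≤ Δ := by exact_mod_cast hDΔ
  have hΔ : (0 : ℝ) < 13 * Δ := by
    have : (3 : ℝ) ≤ D := by exact_mod_cast hD
    linarith
  rcases hD.eq_or_lt with hD3 | hD4
  -- tight: `3 ^ (-11/39) + 3 ^ (-47/39) ≈ 0.9996`
  · have hD3' : (D : ℝ) = 3 := by exact_mod_cast hD3.symm
    have h₁ : ((D : ℝ) - 1) / (13 * Δ) ≤ 2 / 39 := by
      rw [div_le_div_iff₀ hΔ (by norm_num)]
      linarith
    have h₂ : ((D : ℝ) * D - (D + 1)) / (13 * Δ) ≤ 5 / 39 := by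
      rw [div_le_div_iff₀ hΔ (by norm_num), hD3']
      linarith
    calc _ ≤ (3 : ℝ) ^ (-(11 : ℝ) / 39) + (3 : ℝ) ^ (-(47 : ℝ) / 39) :=
          add_le_add (Real.rpow_le_rpow_of_exponent_le (by norm_num) (by linarith))
            (Real.rpow_le_rpow_of_exponent_le (by norm_num) (by linarith))
      _ ≤ 7337 / 10000 + 2662 / 10000 := by
          gcongr
          · simpa using rpow_neg_div_le_of_one_le_mul (p := 11) (q := 39) (b := 3)
              (a := 7337 / 10000) (by norm_num) (by norm_num) (by norm_num) (by norm_num)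
          · simpa using rpow_neg_div_le_of_one_le_mul (p := 47) (q := 39) (b := 3)
              (a := 2662 / 10000) (by norm_num) (by norm_num) (by norm_num) (by norm_num)
      _ ≤ 1 := by norm_num
  · have hD4' : (4 : ℝ) ≤ D := by exact_mod_cast hD4
    have h₁ : ((D : ℝ) - 1) / (13 * Δ) ≤ 1 / 13 := by
      rw [div_le_div_iff₀ hΔ (by norm_num)]
      linarith
    have h₂ : ((D : ℝ) * D - (D + 1)) / (13 * Δ) ≤ (D - 1) / 13 := by
      rw [div_le_div_iff₀ hΔ (by norm_num)]
      nlinarith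
    calc _ ≤ (3 : ℝ) ^ (-(10 : ℝ) / 39) + (3 : ℝ) ^ (-(56 : ℝ) / 39) :=
          add_le_add (Real.rpow_le_rpow_of_exponent_le (by norm_num) (by linarith))
            (Real.rpow_le_rpow_of_exponent_le (by norm_num) (by linarith))
      _ ≤ 755 / 1000 + 21 / 100 := by
          gcongr
          · simpa using rpow_neg_div_le_of_one_le_mul (p := 10) (q := 39) (b := 3)
              (a := 755 / 1000) (by norm_num) (by norm_num) (by norm_num) (by norm_num)
          · simpa using rpow_neg_div_le_of_one_le_mul (p := 56) (q := 39) (b := 3)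
              (a := 21 / 100) (by norm_num) (by norm_num) (by norm_num) (by norm_num)
      _ ≤ 1 := by norm_num

open Function Set

namespace RelGraph

universe u

variable {V : Type*}

abbrev induce (Adj : V → V → Prop) (S : Set V) : S → S → Prop := Adj on (↑)

def IsIndepSet (Adj : V → V → Prop) (I : Set V) : Prop := ∀ x ∈ I, ∀ y ∈ I, ¬ Adj x y

def nbrSet (Adj : V → V → Prop) (v : V) : Set V := {u | u ≠ v ∧ Adj v u}

def closedNbrSet (Adj : V → V → Prop) (v : V) : Set V := insert v (nbrSet Adj v)

noncomputable def degree (Adj : V → V → Prop) (v : V) : ℕ := (nbrSet Adj v).ncard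

def edgeSet (Adj : V → V → Prop) [h : Std.Symm Adj] : Set (Sym2 V) := Sym2.fromRel h

def incidenceSet (Adj : V → V → Prop) [Std.Symm Adj] (v : V) : Set (Sym2 V) :=
  {e ∈ edgeSet Adj | v ∈ e}

section

variable {Adj : V → V → Prop}

theorem graphMIS_eq_ncard :
    graphMIS Adj = {I | Maximal (IsIndepSet Adj) I}.ncard := by
  rw [← Nat.card_coe_set_eq]
  exact Nat.card_congr <|
    Equiv.subtypeEquivRight fun I => (maximal_subset_iff (P := IsIndepSet Adj)).symm

theorem setOf_adj_eq_nbrSet {v : V} (hv : ¬ Adj v v) : {u | Adj v u} = nbrSet Adj v := by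
  ext u
  exact ⟨fun h => ⟨fun e => hv (e ▸ h), h⟩, And.right⟩

theorem maximal_isIndepSet_preimage_val [Std.Symm Adj] {I S : Set V}
    (hI : Maximal (IsIndepSet Adj) I)
    (hS : ∀ x ∈ I, x ∉ S → ∀ y ∈ S, ¬ Adj x y) :
    Maximal (IsIndepSet (induce Adj S)) ((↑) ⁻¹' I) := by
  refine ⟨fun x hx y hy => hI.1 x hx y hy, fun J hJ hIJ x hx => ?_⟩
  have hcross : ∀ x ∈ ((↑) '' J : Set V), ∀ y ∈ I, ¬ Adj x y := by
    rintro _ ⟨x, hx, rfl⟩ y hy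
    by_cases hyS : y ∈ S
    · exact hJ x hx ⟨y, hyS⟩ (hIJ hy)
    · exact fun h => hS y hy hyS x x.2 (symm h)
  have hK : IsIndepSet Adj ((↑) '' J ∪ I) := by
    rintro x (⟨x, hx, rfl⟩ | hx) y (⟨y, hy, rfl⟩ | hy)
    · exact hJ x hx y hy
    · exact hcross x ⟨x, hx, rfl⟩ y hy
    · exact fun h => hcross y ⟨y, hy, rfl⟩ x hx (symm h)
    · exact hI.1 x hx y hy
  exact hI.2 hK subset_union_right (Or.inl ⟨x, hx, rfl⟩)

theorem exists_mem_closedNbrSet_of_maximal [Std.Symm Adj] {I : Set V}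
    (hI : Maximal (IsIndepSet Adj) I) {v : V} (hv : ¬ Adj v v) :
    ∃ u ∈ closedNbrSet Adj v, u ∈ I := by
  by_contra! h
  have hvI : v ∉ I := h v (mem_insert _ _)
  have hvy : ∀ y ∈ I, ¬ Adj v y := fun y hy hvy =>
    h y (Or.inr ⟨fun e => hvI (e ▸ hy), hvy⟩) hy
  have hindep : IsIndepSet Adj (insert v I) := by
    rintro x (rfl | hx) y (rfl | hy)
    · exact hv
    · exact hvy y hy
    · exact fun h' => hvy x hx (symm h')
    · exact hI.1 x hx y hy
  exact hvI (hI.mem_of_prop_insert hindep)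

theorem incidenceSet_sdiff_subset [Std.Symm Adj] (v w : V) :
    incidenceSet Adj w \ incidenceSet Adj v ⊆ (s(w, ·)) '' ({u | Adj w u} \ {v}) := by
  rintro e ⟨⟨he, hw⟩, hv⟩
  obtain ⟨u, rfl⟩ := Sym2.mem_iff_exists.mp hw
  exact ⟨u, ⟨he, fun huv => hv ⟨he, huv ▸ Sym2.mem_mk_right w u⟩⟩, rfl⟩

variable [Finite V]

theorem ncard_closedNbrSet (v : V) : (closedNbrSet Adj v).ncard = degree Adj v + 1 :=
  ncard_insert_of_notMem fun h => h.1 rfl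

theorem natCard_compl_closedNbrSet_add (v : V) :
    Nat.card ↥(closedNbrSet Adj v)ᶜ + (degree Adj v + 1) = Nat.card V := by
  rw [Nat.card_coe_set_eq, ← ncard_closedNbrSet, ncard_compl_add_ncard]

theorem natCard_compl_singleton_add (v : V) : Nat.card ↥({v}ᶜ : Set V) + 1 = Nat.card V := by
  rw [Nat.card_coe_set_eq, ← ncard_singleton v, ncard_compl_add_ncard]

theorem degree_induce_le (S : Set V) (x : S) : degree (induce Adj S) x ≤ degree Adj x :=
  ncard_le_ncard_of_injOn (↑) (fun _ hy => ⟨fun h => hy.1 (Subtype.ext h), hy.2⟩)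
    Subtype.val_injective.injOn

theorem ncard_setOf_adj_le (v : V) : {u | Adj v u}.ncard ≤ degree Adj v + 1 := by
  rw [← ncard_closedNbrSet]
  refine ncard_le_ncard fun u hu => ?_
  by_cases huv : u = v
  · exact huv ▸ mem_insert u _
  · exact Or.inr ⟨huv, hu⟩

variable [Std.Symm Adj]

theorem ncard_maximal_sdiff_eq_le (S T : Set V)
    (hT : ∀ x ∈ T, ∀ y ∈ S, ¬ Adj x y) :
    {I | Maximal (IsIndepSet Adj) I ∧ I \ S = T}.ncard ≤ graphMIS (induce Adj S) := by
  rw [graphMIS_eq_ncard]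
  refine ncard_le_ncard_of_injOn (fun I => ((↑) ⁻¹' I : Set S)) ?_ ?_
  · rintro I ⟨hI, hIT⟩
    exact maximal_isIndepSet_preimage_val hI fun x hx hxS => hT x (hIT ▸ ⟨hx, hxS⟩)
  · rintro I₁ ⟨-, h₁⟩ I₂ ⟨-, h₂⟩ h
    have h' : S ∩ I₁ = S ∩ I₂ := by
      simpa only [Subtype.image_preimage_coe] using congrArg (Subtype.val '' ·) h
    rw [← inter_union_sdiff I₁ S, ← inter_union_sdiff I₂ S, inter_comm, h', h₁, h₂, inter_comm]

theorem ncard_maximal_notMem_le (v : V) :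
    {I | Maximal (IsIndepSet Adj) I ∧ v ∉ I}.ncard ≤
      graphMIS (induce Adj {v}ᶜ) := by
  refine le_trans (ncard_le_ncard ?_) (ncard_maximal_sdiff_eq_le {v}ᶜ ∅ (by simp))
  rintro I ⟨hI, hv⟩
  exact ⟨hI, by rwa [sdiff_compl, inter_singleton_eq_empty]⟩

theorem ncard_maximal_mem_le (v : V) :
    {I | Maximal (IsIndepSet Adj) I ∧ v ∈ I}.ncard ≤
      graphMIS (induce Adj (closedNbrSet Adj v)ᶜ) := by
  refine le_trans (ncard_le_ncard ?_) (ncard_maximal_sdiff_eq_le _ {v} ?_)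
  · rintro I ⟨hI, hv⟩
    refine ⟨hI, ?_⟩
    rw [sdiff_compl]
    ext x
    constructor
    · rintro ⟨hx, rfl | ⟨-, hvx⟩⟩
      · rfl
      · exact absurd hvx (hI.1 v hv x hx)
    · rintro rfl
      exact ⟨hv, mem_insert _ _⟩
  · rintro x rfl y hy hxy
    by_cases hyx : y = x
    · exact hy (hyx ▸ mem_insert _ _)
    · exact hy (Or.inr ⟨hyx, hxy⟩)

theorem graphMIS_le_of_loop {v : V} (hv : Adj v v) :
    graphMIS Adj ≤ graphMIS (induce Adj {v}ᶜ) := by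
  rw [graphMIS_eq_ncard]
  refine le_trans (ncard_le_ncard fun I (hI : Maximal _ I) => ?_) (ncard_maximal_notMem_le v)
  exact ⟨hI, fun h => hI.1 v h v h hv⟩

theorem graphMIS_le_add (v : V) :
    graphMIS Adj ≤ graphMIS (induce Adj {v}ᶜ) + graphMIS (induce Adj (closedNbrSet Adj v)ᶜ) := by
  rw [graphMIS_eq_ncard]
  calc {I | Maximal (IsIndepSet Adj) I}.ncard
      ≤ ({I | Maximal (IsIndepSet Adj) I ∧ v ∉ I} ∪
          {I | Maximal (IsIndepSet Adj) I ∧ v ∈ I}).ncard :=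
        ncard_le_ncard fun I (hI : Maximal _ I) => (em (v ∈ I)).elim
          (fun h => Or.inr ⟨hI, h⟩) (fun h => Or.inl ⟨hI, h⟩)
    _ ≤ _ := (ncard_union_le _ _).trans
        (add_le_add (ncard_maximal_notMem_le v) (ncard_maximal_mem_le v))

theorem graphMIS_le_sum {v : V} (hv : ¬ Adj v v) :
    graphMIS Adj ≤ ∑ u ∈ (toFinite (closedNbrSet Adj v)).toFinset,
      graphMIS (induce Adj (closedNbrSet Adj u)ᶜ) := by
  rw [graphMIS_eq_ncard]
  calc {I | Maximal (IsIndepSet Adj) I}.ncard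
      ≤ (⋃ u ∈ (toFinite (closedNbrSet Adj v)).toFinset,
          {I | Maximal (IsIndepSet Adj) I ∧ u ∈ I}).ncard := by
        refine ncard_le_ncard fun I hI => ?_
        obtain ⟨u, hu, huI⟩ := exists_mem_closedNbrSet_of_maximal hI hv
        exact mem_iUnion₂.2 ⟨u, by simpa using hu, hI, huI⟩
    _ ≤ _ := (Finset.set_ncard_biUnion_le _ _).trans
        (Finset.sum_le_sum fun u _ => ncard_maximal_mem_le u)

theorem ncard_edgeSet_le_add (S : Set V) :
    (edgeSet Adj).ncard ≤
      (edgeSet (induce Adj S)).ncard + {e ∈ edgeSet Adj | ∃ x ∈ e, x ∉ S}.ncard := by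
  calc (edgeSet Adj).ncard
      ≤ (Sym2.map (↑) '' edgeSet (induce Adj S) ∪ {e ∈ edgeSet Adj | ∃ x ∈ e, x ∉ S}).ncard := by
        refine ncard_le_ncard fun e he => ?_
        by_cases h : ∃ x ∈ e, x ∉ S
        · exact Or.inr ⟨he, h⟩
        · push Not at h
          left
          induction e using Sym2.ind with
          | _ x y =>
            exact ⟨s(⟨x, h x (Sym2.mem_mk_left x y)⟩, ⟨y, h y (Sym2.mem_mk_right x y)⟩), he, rfl⟩
    _ ≤ _ := (ncard_union_le _ _).trans (Nat.add_le_add_right (ncard_image_le (toFinite _)) _)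

theorem ncard_incidenceSet_le (v : V) : (incidenceSet Adj v).ncard ≤ {u | Adj v u}.ncard := by
  refine (ncard_le_ncard ?_ (toFinite _)).trans (ncard_image_le (f := (s(v, ·))) (toFinite _))
  rintro e ⟨he, hv⟩
  obtain ⟨u, rfl⟩ := Sym2.mem_iff_exists.mp hv
  exact ⟨u, he, rfl⟩

theorem ncard_edgeSet_le_induce_compl_singleton (v : V) :
    (edgeSet Adj).ncard ≤ (edgeSet (induce Adj {v}ᶜ)).ncard + {u | Adj v u}.ncard := by
  refine (ncard_edgeSet_le_add _).trans (Nat.add_le_add_left ?_ _)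
  refine (ncard_le_ncard ?_).trans (ncard_incidenceSet_le v)
  rintro e ⟨he, x, hx, hxv⟩
  rw [mem_compl_iff, not_not, mem_singleton_iff] at hxv
  exact ⟨he, hxv ▸ hx⟩

theorem ncard_incidenceSet_sdiff_add_one_le (hnl : ∀ x, ¬ Adj x x) {v w : V}
    (hw : w ∈ nbrSet Adj v) :
    (incidenceSet Adj w \ incidenceSet Adj v).ncard + 1 ≤ degree Adj w := by
  have hvw : v ∈ nbrSet Adj w := ⟨fun e => hw.1 e.symm, symm hw.2⟩
  rw [degree, ← ncard_sdiff_singleton_add_one hvw, ← setOf_adj_eq_nbrSet (hnl w)]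
  exact Nat.add_le_add_right ((ncard_le_ncard (incidenceSet_sdiff_subset v w)).trans
    (ncard_image_le (toFinite _))) 1

theorem ncard_edgeSet_le_induce_compl_closedNbrSet (hnl : ∀ x, ¬ Adj x x) {D : ℕ}
    (hD : ∀ w, degree Adj w ≤ D) (v : V) :
    (edgeSet Adj).ncard ≤
      (edgeSet (induce Adj (closedNbrSet Adj v)ᶜ)).ncard + degree Adj v * D := by
  set t := (toFinite (nbrSet Adj v)).toFinset
  have hcut : {e ∈ edgeSet Adj | ∃ x ∈ e, x ∉ (closedNbrSet Adj v)ᶜ} ⊆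
      incidenceSet Adj v ∪ ⋃ w ∈ t, (incidenceSet Adj w \ incidenceSet Adj v) := by
    rintro e ⟨he, x, hx, hxv⟩
    rw [notMem_compl_iff] at hxv
    by_cases hv : v ∈ e
    · exact Or.inl ⟨he, hv⟩
    · rcases hxv with rfl | hxv
      · exact absurd hx hv
      · exact Or.inr (mem_iUnion₂.2 ⟨x, by simpa [t] using hxv, ⟨he, hx⟩, fun h => hv h.2⟩)
  have hdeg : degree Adj v = t.card := by rw [degree, ncard_eq_toFinset_card]
  refine (ncard_edgeSet_le_add _).trans (Nat.add_le_add_left ?_ _)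
  calc _ ≤ (incidenceSet Adj v).ncard + ∑ w ∈ t, (incidenceSet Adj w \ incidenceSet Adj v).ncard :=
        (ncard_le_ncard hcut).trans <| (ncard_union_le _ _).trans <|
          Nat.add_le_add_left (Finset.set_ncard_biUnion_le _ _) _
    _ ≤ ∑ w ∈ t, ((incidenceSet Adj w \ incidenceSet Adj v).ncard + 1) := by
        rw [Finset.sum_add_distrib, Finset.sum_const, smul_eq_mul, mul_one, add_comm, ← hdeg]
        exact Nat.add_le_add_left ((ncard_incidenceSet_le v).trans_eq
          (congrArg ncard (setOf_adj_eq_nbrSet (hnl v)))) _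
    _ ≤ ∑ _w ∈ t, D := Finset.sum_le_sum fun w hw =>
        (ncard_incidenceSet_sdiff_add_one_le hnl (by simpa [t] using hw)).trans (hD w)
    _ = degree Adj v * D := by rw [Finset.sum_const, smul_eq_mul, hdeg]

theorem two_mul_ncard_edgeSet_le (hnl : ∀ x, ¬ Adj x x) {D : ℕ} (hD : ∀ v, degree Adj v ≤ D) :
    2 * (edgeSet Adj).ncard ≤ D * Nat.card V := by
  classical
  have := Fintype.ofFinite V
  let G : SimpleGraph V := { Adj := Adj, loopless := ⟨hnl⟩ }
  have hE : G.edgeSet = edgeSet Adj := by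
    ext e
    induction e using Sym2.ind
    rfl
  have hdeg (v : V) : G.degree v = degree Adj v := by
    rw [← G.card_neighborSet_eq_degree, ← Nat.card_eq_fintype_card, Nat.card_coe_set_eq,
      degree, ← setOf_adj_eq_nbrSet (hnl v)]
    rfl
  calc 2 * (edgeSet Adj).ncard = ∑ v, G.degree v := by
        rw [G.sum_degrees_eq_twice_card_edges, ← hE, ← SimpleGraph.coe_edgeFinset, ncard_coe_finset]
    _ ≤ ∑ _v : V, D := Finset.sum_le_sum fun v _ => (hdeg v).trans_le (hD v)
    _ = D * Nat.card V := by rw [Finset.sum_const, smul_eq_mul, mul_comm, Finset.card_univ,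
        Nat.card_eq_fintype_card]

end

theorem graphMIS_le_three_rpow {V : Type u} [Finite V] (Adj : V → V → Prop) [Std.Symm Adj] :
    (graphMIS Adj : ℝ) ≤ 3 ^ ((Nat.card V : ℝ) / 3) := by
  induction hn : Nat.card V using Nat.strong_induction_on generalizing V with
  | _ n ih =>
  rcases isEmpty_or_nonempty V with hV | hV
  · have : graphMIS Adj ≤ 1 := Finite.card_le_one_iff_subsingleton.2
      ⟨fun I J => Subtype.ext (by simp [eq_empty_of_isEmpty])⟩
    rw [← hn, Nat.card_of_isEmpty]
    simpa using this
  by_cases hloop : ∃ v, Adj v v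
  · obtain ⟨v, hv⟩ := hloop
    have hcard := natCard_compl_singleton_add (V := V) v
    calc (graphMIS Adj : ℝ) ≤ graphMIS (induce Adj {v}ᶜ) := by
          exact_mod_cast graphMIS_le_of_loop hv
      _ ≤ 3 ^ ((Nat.card ↥({v}ᶜ : Set V) : ℝ) / 3) := ih _ (by omega) _ rfl
      _ ≤ 3 ^ ((n : ℝ) / 3) := by
          gcongr
          · norm_num
          · exact_mod_cast (by omega : _ ≤ n)
  push Not at hloop
  obtain ⟨v, hv⟩ := Finite.exists_min (degree Adj)
  set d := degree Adj v + 1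
  have hbranch (u : V) :
      (graphMIS (induce Adj (closedNbrSet Adj u)ᶜ) : ℝ) ≤ 3 ^ (((n : ℝ) - d) / 3) := by
    have hcard := natCard_compl_closedNbrSet_add (Adj := Adj) u
    have := hv u
    refine (ih _ (by omega) _ rfl).trans ?_
    gcongr
    · norm_num
    · rw [le_sub_iff_add_le]
      exact_mod_cast (by omega : _ ≤ n)
  calc (graphMIS Adj : ℝ)
      ≤ ∑ u ∈ (toFinite (closedNbrSet Adj v)).toFinset,
          (graphMIS (induce Adj (closedNbrSet Adj u)ᶜ) : ℝ) := by
        exact_mod_cast graphMIS_le_sum (hloop v)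
    _ ≤ ∑ u ∈ (toFinite (closedNbrSet Adj v)).toFinset, (3 : ℝ) ^ (((n : ℝ) - d) / 3) :=
        Finset.sum_le_sum fun u _ => hbranch u
    _ = d * 3 ^ (((n : ℝ) - d) / 3) := by
        rw [Finset.sum_const, nsmul_eq_mul, ← ncard_eq_toFinset_card, ncard_closedNbrSet]
    _ ≤ 3 ^ ((d : ℝ) / 3) * 3 ^ (((n : ℝ) - d) / 3) := by
        gcongr
        exact natCast_le_three_rpow d
    _ = 3 ^ ((n : ℝ) / 3) := by
        rw [← Real.rpow_add three_pos]
        ring_nf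

noncomputable def stabilityExponent (Δ n m : ℝ) : ℝ := n / 3 - (m - n) / (13 * Δ)

theorem stabilityExponent_le_of_le {Δ n n' m m' d e : ℝ} (hΔ : 0 ≤ Δ) (hn : n' + d = n)
    (hm : m ≤ m' + e) :
    stabilityExponent Δ n' m' ≤ stabilityExponent Δ n m + (-(d / 3) + (e - d) / (13 * Δ)) := by
  have h : (m - n - (e - d)) / (13 * Δ) ≤ (m' - n') / (13 * Δ) :=
    div_le_div_of_nonneg_right (by linarith) (by positivity)
  rw [sub_div] at h
  unfold stabilityExponent
  linarith

theorem stabilityExponent_le_of_loop {Δ n n' m m' d : ℝ} (hd : 0 ≤ d) (hdΔ : d + 2 ≤ Δ)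
    (hn : n' + 1 = n) (hm : m ≤ m' + (d + 1)) :
    stabilityExponent Δ n' m' ≤ stabilityExponent Δ n m := by
  have hΔ : 0 < Δ := by linarith
  have hloss : (d + 1 - 1) / (13 * Δ) ≤ 1 / 3 := by
    rw [div_le_div_iff₀ (by positivity) (by norm_num)]
    linarith
  linarith [stabilityExponent_le_of_le (d := 1) (e := d + 1) hΔ.le hn hm]

theorem le_stabilityExponent {Δ n m : ℝ} (hΔ : 0 ≤ Δ) (hmn : m ≤ n) :
    n / 3 ≤ stabilityExponent Δ n m := by
  have : (m - n) / (13 * Δ) ≤ 0 := div_nonpos_of_nonpos_of_nonneg (by linarith) (by positivity)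
  unfold stabilityExponent
  linarith

open Classical in
theorem graphMIS_le_three_rpow_stabilityExponent {V : Type u} [Finite V] (Δ : ℕ)
    (Adj : V → V → Prop) [Std.Symm Adj]
    (hdeg : ∀ v, degree Adj v + (if Adj v v then 2 else 0) ≤ Δ) :
    (graphMIS Adj : ℝ) ≤ 3 ^ stabilityExponent Δ (Nat.card V) (edgeSet Adj).ncard := by
  induction hn : Nat.card V using Nat.strong_induction_on generalizing V with
  | _ n ih =>
  have hΔ : (0 : ℝ) ≤ Δ := Nat.cast_nonneg Δ
  have ih' (S : Set V) (hS : Nat.card S < n) : (graphMIS (induce Adj S) : ℝ) ≤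
      3 ^ stabilityExponent Δ (Nat.card S) (edgeSet (induce Adj S)).ncard :=
    ih _ hS _ (fun x => (Nat.add_le_add_right (degree_induce_le S x) _).trans (hdeg x)) rfl
  by_cases hloop : ∃ v, Adj v v
  · obtain ⟨v, hv⟩ := hloop
    have hdv : degree Adj v + 2 ≤ Δ := by simpa [hv] using hdeg v
    have hcard := (natCard_compl_singleton_add (V := V) v).trans hn
    have hm := (ncard_edgeSet_le_induce_compl_singleton (Adj := Adj) v).trans
      (Nat.add_le_add_left (ncard_setOf_adj_le v) _)
    calc (graphMIS Adj : ℝ) ≤ graphMIS (induce Adj {v}ᶜ) := by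
          exact_mod_cast graphMIS_le_of_loop hv
      _ ≤ 3 ^ stabilityExponent Δ (Nat.card ↥({v}ᶜ : Set V)) (edgeSet (induce Adj {v}ᶜ)).ncard :=
          ih' _ (by omega)
      _ ≤ 3 ^ stabilityExponent Δ n (edgeSet Adj).ncard :=
          Real.rpow_le_rpow_of_exponent_le (by norm_num) (stabilityExponent_le_of_loop
            (d := degree Adj v) (Nat.cast_nonneg _) (by exact_mod_cast hdv)
            (by exact_mod_cast hcard) (by exact_mod_cast hm))
  push Not at hloop
  by_cases hsmall : ∀ v, degree Adj v ≤ 2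
  · have hm := two_mul_ncard_edgeSet_le hloop hsmall
    calc (graphMIS Adj : ℝ) ≤ 3 ^ ((n : ℝ) / 3) := hn ▸ graphMIS_le_three_rpow Adj
      _ ≤ _ := Real.rpow_le_rpow_of_exponent_le (by norm_num)
          (le_stabilityExponent hΔ (by exact_mod_cast (by omega : _ ≤ n)))
  push Not at hsmall
  obtain ⟨v₀, hv₀⟩ := hsmall
  have : Nonempty V := ⟨v₀⟩
  obtain ⟨v, hv⟩ := Finite.exists_max (degree Adj)
  set D := degree Adj v
  have hD : 3 ≤ D := hv₀.trans_le (hv v₀)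
  have hDΔ : D ≤ Δ := by simpa [hloop v] using hdeg v
  have hcard₁ := (natCard_compl_singleton_add (V := V) v).trans hn
  have hcard₂ := (natCard_compl_closedNbrSet_add (Adj := Adj) v).trans hn
  have hm₁ : (edgeSet Adj).ncard ≤ (edgeSet (induce Adj {v}ᶜ)).ncard + D := by
    refine (ncard_edgeSet_le_induce_compl_singleton v).trans_eq ?_
    rw [setOf_adj_eq_nbrSet (hloop v)]
    rfl
  have hm₂ := ncard_edgeSet_le_induce_compl_closedNbrSet hloop hv v
  refine le_rpow_of_le_add (by norm_num) (by exact_mod_cast graphMIS_le_add v)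
    (ih' _ (by omega)) (ih' _ (by omega))
    (stabilityExponent_le_of_le hΔ (d := 1) (e := D) (by exact_mod_cast hcard₁)
      (by exact_mod_cast hm₁))
    (stabilityExponent_le_of_le hΔ (d := D + 1) (e := D * D) (by exact_mod_cast hcard₂)
      (by exact_mod_cast hm₂))
    (three_rpow_add_three_rpow_le_one hD hDΔ)

end RelGraph

open RelGraph

open Classical in
theorem mis_of_dense_bounded_degree_graph_general
    (Δ : ℕ) (k : ℤ) (C : ℝ) (hC : C ≥ 3 ^ ((Δ : ℝ) / 13))
    (V : Type) [Fintype V] (Adj : V → V → Prop) (hsym : Symmetric Adj)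
    (n : ℕ) (hn : n = Fintype.card V)
    (hedges : ((Sym2.fromRel (⟨fun a b h => hsym h⟩ : Std.Symm Adj)).ncard : ℤ) = (n : ℤ) + k)
    (hdeg : ∀ v : V,
      {u : V | u ≠ v ∧ Adj v u}.ncard + (if Adj v v then 2 else 0) ≤ Δ) :
    (graphMIS Adj : ℝ) ≤ C * 3 ^ ((n : ℝ) / 3 - (k : ℝ) / (13 * Δ)) := by
  have : Std.Symm Adj := ⟨fun _ _ h => hsym h⟩
  have hbound := graphMIS_le_three_rpow_stabilityExponent Δ Adj hdeg
  have hexp : stabilityExponent Δ (Nat.card V) (edgeSet Adj).ncard = n / 3 - k / (13 * Δ) := by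
    have hm : ((edgeSet Adj).ncard : ℝ) = n + k := by exact_mod_cast hedges
    rw [stabilityExponent, hm, Nat.card_eq_fintype_card, ← hn]
    ring
  have hC₁ : 1 ≤ C := (Real.one_le_rpow (by norm_num) (by positivity)).trans hC
  calc (graphMIS Adj : ℝ) ≤ 3 ^ ((n : ℝ) / 3 - k / (13 * Δ)) := hexp ▸ hbound
    _ ≤ C * 3 ^ ((n : ℝ) / 3 - (k : ℝ) / (13 * Δ)) := le_mul_of_one_le_left (by positivity) hC₁

open Classical in
/-- Stability version of the Moon–Moser bound: an `n`-vertex graph (loops allowed)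
with `n + k` edges and maximum degree at most `Δ` has at most
`C * 3 ^ (n/3 - k/(13Δ))` maximal independent sets, whenever `C ≥ 3 ^ (Δ/13)`. -/
theorem mis_of_dense_bounded_degree_graph
    (Δ : ℕ) (hΔ : 1 ≤ Δ) (k : ℤ) (C : ℝ) (hC : C ≥ 3 ^ ((Δ : ℝ) / 13))
    (V : Type) [Fintype V] (Adj : V → V → Prop) (hsym : Symmetric Adj)
    (n : ℕ) (hn : n = Fintype.card V)
    (hedges : ((Sym2.fromRel (⟨fun a b h => hsym h⟩ : Std.Symm Adj)).ncard : ℤ) = (n : ℤ) + k)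
    (hdeg : ∀ v : V,
      {u : V | u ≠ v ∧ Adj v u}.ncard + (if Adj v v then 2 else 0) ≤ Δ) :
    (graphMIS Adj : ℝ) ≤ C * 3 ^ ((n : ℝ) / 3 - (k : ℝ) / (13 * Δ)) :=
  mis_of_dense_bounded_degree_graph_general Δ k C hC V Adj hsym n hn hedges hdeg
end

section
/- Let G be a finite abelian group, let H be a subgroup of G of index 2, let B = G \ H, and let S ⊆ H be a sum-free set. Then for every x ∈ B, the number of y ∈ B with x + y ∈ S and x − y ∉ S ∪ (−S) equals |S| − |{s ∈ S : x + x ∈ s + (S ∪ (−S))}|. In particular, this number is at most |S|, with equality if and only if x + x ∉ S + (S ∪ (−S)). -/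
open Pointwise

/-- A subset `A` of an additive group is *sum-free* if there are no
`x, y, z ∈ A` (not necessarily distinct) with `x + y = z`. -/
def IsSumFree {G : Type*} [AddCommGroup G] (A : Set G) : Prop :=
  ∀ x ∈ A, ∀ y ∈ A, x + y ∉ A

/-- In the link graph `L_S[B]`, where `B` is the nontrivial coset of an index-2
subgroup `H` and `S ⊆ H` is sum-free, every vertex `x` is incident to exactly
`|S| - |{s ∈ S : 2x ∈ s + (S ∪ (−S))}|` type-2 edges; in particular at most `|S|`
of them, with equality iff `2x ∉ S + (S ∪ (−S))`. -/
theorem type_two_degree_in_link_graph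
    {G : Type*} [AddCommGroup G] [Fintype G]
    (H : AddSubgroup G) (hidx : H.index = 2)
    (B : Set G) (hB : B = (H : Set G)ᶜ)
    (S : Set G) (hSH : S ⊆ (H : Set G)) (hSF : IsSumFree S) :
    ∀ x ∈ B,
      ({y ∈ B | x + y ∈ S ∧ x - y ∉ S ∪ -S}.ncard : ℤ)
          = (S.ncard : ℤ) - ({s ∈ S | ∃ u ∈ S ∪ -S, x + x = s + u}.ncard : ℤ) ∧
        {y ∈ B | x + y ∈ S ∧ x - y ∉ S ∪ -S}.ncard ≤ S.ncard ∧
        ({y ∈ B | x + y ∈ S ∧ x - y ∉ S ∪ -S}.ncard = S.ncard ↔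
          x + x ∉ S + (S ∪ -S)) := by
  intro x hx
  set bad := {s ∈ S | ∃ u ∈ S ∪ -S, x + x = s + u} with hbad
  have hbadS : bad ⊆ S := fun s hs => hs.1
  have hxH : x ∉ (H : Set G) := by rw [hB] at hx; exact hx
  -- The image of the neighbour set under (x + ·) is S \ bad.
  have himg : (fun y => x + y) '' {y ∈ B | x + y ∈ S ∧ x - y ∉ S ∪ -S} = S \ bad := by
    ext s
    constructor
    · rintro ⟨y, ⟨hyB, hyS, hy2⟩, rfl⟩
      refine ⟨hyS, fun hs => hy2 ?_⟩
      obtain ⟨-, u, hu, heq⟩ := hs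
      have heq' : x + x = (x + y) + u := heq
      have h2 : x - y = u := by
        rw [show x - y = x + x - (x + y) by abel, heq']; abel
      rw [h2]; exact hu
    · rintro ⟨hsS, hsbad⟩
      refine ⟨s - x, ⟨?_, ?_, ?_⟩, show x + (s - x) = s by abel⟩
      · rw [hB]
        intro hmem
        exact hxH (by simpa using H.sub_mem (hSH hsS) hmem)
      · show x + (s - x) ∈ S; simpa using hsS
      · intro hu
        exact hsbad ⟨hsS, x - (s - x), hu, by abel⟩
  have hinj : Function.Injective (fun y : G => x + y) := fun a b h => by
    simpa using h
  have hcard : {y ∈ B | x + y ∈ S ∧ x - y ∉ S ∪ -S}.ncard = (S \ bad).ncard := by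
    rw [← himg, Set.ncard_image_of_injective _ hinj]
  have hdiff : (S \ bad).ncard = S.ncard - bad.ncard := Set.ncard_diff hbadS
  have hle : bad.ncard ≤ S.ncard := Set.ncard_le_ncard hbadS S.toFinite
  refine ⟨?_, ?_, ?_⟩
  · rw [hcard, hdiff]; push_cast [Nat.cast_sub hle]; ring
  · rw [hcard, hdiff]; omega
  · rw [hcard, hdiff]
    have hmem : x + x ∈ S + (S ∪ -S) ↔ bad.Nonempty := by
      constructor
      · rintro ⟨a, ha, b, hb, hab⟩
        exact ⟨a, ha, b, hb, hab.symm⟩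
      · rintro ⟨s, hsS, u, hu, heq⟩
        exact ⟨s, hsS, u, hu, heq.symm⟩
    constructor
    · intro h hmem'
      have hpos : 0 < bad.ncard := (Set.ncard_pos bad.toFinite).mpr (hmem.mp hmem')
      omega
    · intro h
      have : bad = ∅ := by
        by_contra hne
        exact h (hmem.mpr (Set.nonempty_iff_ne_empty.mpr hne))
      rw [this, Set.ncard_empty]
      omega
end

section
/- There exists n₀ ∈ ℕ such that the following holds: if G is a finite abelian group of order n ≥ n₀, H is a subgroup of G of index 2, B = G \ H, and S ⊆ H is a sum-free set with |S| ≥ 10⁴, then the number of maximal independent sets of the link graph L_S[B] is at most 2^{0.24·n}. -/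
open Pointwise

/-- `I` is an independent set of the link graph `L_S[B]`: a subset of `B` containing
no looped vertex (a vertex `x` with `x + x ∈ S` or `x ∈ (S + S) ∪ (S - S)`) and no
pair of distinct adjacent vertices (`x, y` with `x + y ∈ S` or `x - y ∈ S ∪ (−S)`). -/
def LinkIndep {G : Type*} [AddCommGroup G] (S B I : Set G) : Prop :=
  I ⊆ B ∧ (∀ x ∈ I, ¬(x + x ∈ S ∨ x ∈ (S + S) ∪ (S - S))) ∧
    ∀ x ∈ I, ∀ y ∈ I, x ≠ y → ¬(x + y ∈ S ∨ x - y ∈ S ∪ -S)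

/-- The number of maximal independent sets of the link graph `L_S[B]`. -/
noncomputable def linkMIS {G : Type*} [AddCommGroup G] (S B : Set G) : ℕ :=
  Nat.card {I : Set G // LinkIndep S B I ∧
    ∀ J : Set G, LinkIndep S B J → I ⊆ J → I = J}

/-!
Since `S ⊆ H`, the sets `S + S` and `S - S` miss the coset `B`, and every `v ∈ B` has between
`|S|` and `3|S|` neighbours `v ± s`, `s - v` in `B`. So it suffices to count maximal independent
sets of an induced subgraph on `W ⊆ Ω` of a graph whose degrees into `Ω` lie in `[D, 3D]`,
`D ≥ 10⁴`. By branching on a vertex `v` (either `v` is in the set or not; or else some vertex of the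
closed neighbourhood of `v` is in it) their number is at most `2 ^ φ(W)` for the potential
`φ(W) = ∑_{v ∈ W} (0.48 + d_{Ω \ W}(v) / 20D)`. Deleting `w` lowers `φ` by at least
`0.48 + (d_Ω(w) - 2 d_W(w)) / 20D`, which is `≥ 0.33` always, `≥ 0.48` if `d_W(w) ≤ D/2` and
`≥ 37/70` if `d_W(w) ≤ 4`: this pays for a two-way branch at a vertex of degree `≥ 5` in `W`,
and for a Moon–Moser branch over the closed neighbourhood of a vertex of minimum degree when all
degrees are at most 4. Finally `φ(W) ≤ 0.48 |Ω| = 0.24 n`, as at most `3D |Ω \ W|` edges leave `W`.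
-/

open Finset

theorem two_rpow_neg_le {x c : ℝ} {a q : ℕ} (hq : q ≠ 0) (hx : x * q = a) (hc : 0 ≤ c)
    (h : 1 ≤ 2 ^ a * c ^ q) : (2 : ℝ) ^ (-x) ≤ c := by
  refine le_of_pow_le_pow_left₀ hq hc ?_
  rw [← Real.rpow_mul_natCast zero_le_two, neg_mul, hx, Real.rpow_neg zero_le_two,
    Real.rpow_natCast, inv_le_iff_one_le_mul₀' (by positivity)]
  exact h

-- `37/70` exceeds the Moon–Moser rate `log₂ 3 / 3` by less than `3 · 10⁻⁴`: `k = 3` is tight.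
theorem two_rpow_neg_mul_le_one_div {k : ℕ} (hk1 : 1 ≤ k) (hk5 : k ≤ 5) :
    (2 : ℝ) ^ (-((k : ℝ) * (37 / 70))) ≤ 1 / k :=
  two_rpow_neg_le (a := 37 * k) (q := 70) (by norm_num) (by push_cast; ring) (by positivity)
    (by interval_cases k <;> norm_num)

namespace SimpleGraph

variable {α : Type*} {G : SimpleGraph α}

variable (G) in
open scoped Classical in
noncomputable def maxIndepSets (W : Finset α) : Finset (Finset α) :=
  {I ∈ W.powerset | Maximal (fun J : Finset α => J ⊆ W ∧ G.IsIndepSet J) I}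

theorem mem_maxIndepSets {W I : Finset α} :
    I ∈ G.maxIndepSets W ↔ Maximal (fun J : Finset α => J ⊆ W ∧ G.IsIndepSet J) I := by
  simp only [maxIndepSets, mem_filter, mem_powerset, and_iff_right_iff_imp]
  exact fun h => h.prop.1

theorem card_maxIndepSets_empty_le : #(G.maxIndepSets ∅) ≤ 1 := by
  refine (card_le_card fun I hI => mem_powerset.mpr (mem_maxIndepSets.mp hI).prop.1).trans ?_
  simp

section

variable [DecidableEq α]

theorem mem_maxIndepSets_erase {W I : Finset α} {v : α} (hI : I ∈ G.maxIndepSets W)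
    (hv : v ∉ I) : I ∈ G.maxIndepSets (W.erase v) := by
  rw [mem_maxIndepSets] at hI ⊢
  exact ⟨⟨fun x hx => mem_erase.mpr ⟨ne_of_mem_of_not_mem hx hv, hI.prop.1 hx⟩, hI.prop.2⟩,
    fun J hJ hIJ => hI.2 ⟨hJ.1.trans (erase_subset _ _), hJ.2⟩ hIJ⟩

end

variable [DecidableRel G.Adj]

variable (G) in
def degreeIn (W : Finset α) (v : α) : ℕ := #{u ∈ W | G.Adj v u}

theorem degreeIn_mono {A C : Finset α} (h : A ⊆ C) (v : α) : G.degreeIn A v ≤ G.degreeIn C v :=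
  card_le_card (filter_subset_filter _ h)

theorem sum_degreeIn_comm (A C : Finset α) :
    ∑ a ∈ A, G.degreeIn C a = ∑ c ∈ C, G.degreeIn A c :=
  calc ∑ a ∈ A, G.degreeIn C a = ∑ c ∈ C, #{a ∈ A | G.Adj a c} :=
        sum_card_bipartiteAbove_eq_sum_card_bipartiteBelow G.Adj
    _ = ∑ c ∈ C, G.degreeIn A c := by simp only [degreeIn, G.adj_comm]

variable (G) in
noncomputable def potentialDrop (Ω : Finset α) (D : ℕ) (W : Finset α) (w : α) : ℝ :=
  12 / 25 + ((G.degreeIn Ω w : ℝ) - 2 * G.degreeIn W w) / (20 * D)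

theorem potentialDrop_ge_of_le {Ω W : Finset α} {D : ℕ} (hD : 0 < D) (hW : W ⊆ Ω) {w : α}
    (h : G.degreeIn Ω w ≤ 3 * D) : 33 / 100 ≤ G.potentialDrop Ω D W w := by
  have : (G.degreeIn W w : ℝ) ≤ G.degreeIn Ω w := by exact_mod_cast degreeIn_mono hW w
  have : (G.degreeIn Ω w : ℝ) ≤ 3 * D := by exact_mod_cast h
  rw [potentialDrop, ← sub_le_iff_le_add', le_div_iff₀ (by positivity)]
  linarith

theorem potentialDrop_ge_of_two_mul_le {Ω W : Finset α} {D : ℕ} {w : α}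
    (h : D ≤ G.degreeIn Ω w) (h' : 2 * G.degreeIn W w ≤ D) :
    12 / 25 ≤ G.potentialDrop Ω D W w := by
  have : (2 * G.degreeIn W w : ℝ) ≤ G.degreeIn Ω w := by exact_mod_cast h'.trans h
  exact le_add_of_nonneg_right (div_nonneg (by linarith) (by positivity))

theorem potentialDrop_ge_of_le_four {Ω W : Finset α} {D : ℕ} (hD : 10 ^ 4 ≤ D) {w : α}
    (h : D ≤ G.degreeIn Ω w) (h' : G.degreeIn W w ≤ 4) :
    37 / 70 ≤ G.potentialDrop Ω D W w := by
  have : (10 ^ 4 : ℝ) ≤ D := by exact_mod_cast hD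
  have : (D : ℝ) ≤ G.degreeIn Ω w := by exact_mod_cast h
  have : (G.degreeIn W w : ℝ) ≤ 4 := by exact_mod_cast h'
  rw [potentialDrop, ← sub_le_iff_le_add', le_div_iff₀ (by positivity)]
  linarith

variable [DecidableEq α]

variable (G) in
def closedNbhdIn (W : Finset α) (v : α) : Finset α := insert v {u ∈ W | G.Adj v u}

theorem mem_closedNbhdIn_self {W : Finset α} {v : α} : v ∈ G.closedNbhdIn W v :=
  mem_insert_self _ _

theorem mem_closedNbhdIn_of_adj {W : Finset α} {v u : α} (hu : u ∈ W) (h : G.Adj v u) :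
    u ∈ G.closedNbhdIn W v :=
  mem_insert_of_mem (mem_filter.mpr ⟨hu, h⟩)

theorem closedNbhdIn_subset {W : Finset α} {v : α} (hv : v ∈ W) : G.closedNbhdIn W v ⊆ W :=
  insert_subset hv (filter_subset _ _)

theorem card_closedNbhdIn (W : Finset α) (v : α) :
    #(G.closedNbhdIn W v) = G.degreeIn W v + 1 :=
  card_insert_of_notMem fun h => G.irrefl (mem_filter.mp h).2

theorem erase_mem_maxIndepSets_sdiff {W I : Finset α} {v : α} (hI : I ∈ G.maxIndepSets W)
    (hv : v ∈ I) : I.erase v ∈ G.maxIndepSets (W \ G.closedNbhdIn W v) := by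
  rw [mem_maxIndepSets] at hI ⊢
  obtain ⟨hIW, hIind⟩ := hI.prop
  refine ⟨⟨fun x hx => ?_, hIind.mono (erase_subset _ _)⟩, fun J ⟨hJW, hJind⟩ hIJ => ?_⟩
  · obtain ⟨hxv, hxI⟩ := mem_erase.mp hx
    refine mem_sdiff.mpr ⟨hIW hxI, fun hxN => ?_⟩
    rcases mem_insert.mp hxN with rfl | hxN
    · exact hxv rfl
    · exact hIind hv hxI (Ne.symm hxv) (mem_filter.mp hxN).2
  · have hvJ : v ∉ J := fun h => (mem_sdiff.mp (hJW h)).2 mem_closedNbhdIn_self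
    have hnadj : ∀ u ∈ J, ¬G.Adj v u := fun u hu hvu =>
      (mem_sdiff.mp (hJW hu)).2 (mem_closedNbhdIn_of_adj (mem_sdiff.mp (hJW hu)).1 hvu)
    have hins : insert v J ⊆ W ∧ G.IsIndepSet (insert v J : Finset α) := by
      refine ⟨insert_subset (hIW hv) (hJW.trans sdiff_subset), ?_⟩
      rw [coe_insert]
      exact hJind.insert_of_notMem hvJ fun u hu => ⟨hnadj u hu, fun h => hnadj u hu h.symm⟩
    have hIJ' : I ⊆ insert v J := fun x hx => by
      rcases eq_or_ne x v with rfl | hxv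
      · exact mem_insert_self _ _
      · exact mem_insert_of_mem (hIJ (mem_erase.mpr ⟨hxv, hx⟩))
    rw [hI.eq_of_le hins hIJ', erase_insert hvJ]

theorem exists_mem_closedNbhdIn_of_mem_maxIndepSets {W I : Finset α} {v : α} (hv : v ∈ W)
    (hI : I ∈ G.maxIndepSets W) : ∃ u ∈ G.closedNbhdIn W v, u ∈ I := by
  by_contra! h
  rw [mem_maxIndepSets] at hI
  have hvI : v ∉ I := h v mem_closedNbhdIn_self
  have hnadj : ∀ u ∈ I, ¬G.Adj v u := fun u hu hvu =>
    h u (mem_closedNbhdIn_of_adj (hI.prop.1 hu) hvu) hu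
  have hins : insert v I ⊆ W ∧ G.IsIndepSet (insert v I : Finset α) := by
    refine ⟨insert_subset hv hI.prop.1, ?_⟩
    rw [coe_insert]
    exact hI.prop.2.insert_of_notMem hvI fun u hu => ⟨hnadj u hu, fun h => hnadj u hu h.symm⟩
  exact hvI ((hI.eq_of_le hins (subset_insert _ _)).symm ▸ mem_insert_self v I)

theorem card_filter_mem_maxIndepSets_le (W : Finset α) (v : α) :
    #{I ∈ G.maxIndepSets W | v ∈ I} ≤ #(G.maxIndepSets (W \ G.closedNbhdIn W v)) := by
  refine card_le_card_of_injOn (fun I => I.erase v) (fun I hI => ?_) fun I hI J hJ hIJ => ?_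
  · obtain ⟨hI, hvI⟩ := mem_filter.mp hI
    exact erase_mem_maxIndepSets_sdiff hI hvI
  · rw [← insert_erase (mem_filter.mp hI).2, ← insert_erase (mem_filter.mp hJ).2]
    exact congrArg (insert v) hIJ

theorem card_maxIndepSets_le_erase_add (W : Finset α) (v : α) :
    #(G.maxIndepSets W) ≤
      #(G.maxIndepSets (W.erase v)) + #(G.maxIndepSets (W \ G.closedNbhdIn W v)) := by
  rw [← card_filter_add_card_filter_not (fun I => v ∈ I), add_comm]
  refine add_le_add (card_le_card fun I hI => ?_) (card_filter_mem_maxIndepSets_le W v)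
  obtain ⟨hI, hvI⟩ := mem_filter.mp hI
  exact mem_maxIndepSets_erase hI hvI

theorem card_maxIndepSets_le_sum {W : Finset α} {v : α} (hv : v ∈ W) :
    #(G.maxIndepSets W) ≤
      ∑ u ∈ G.closedNbhdIn W v, #(G.maxIndepSets (W \ G.closedNbhdIn W u)) := by
  calc #(G.maxIndepSets W)
      ≤ #((G.closedNbhdIn W v).biUnion fun u => {I ∈ G.maxIndepSets W | u ∈ I}) :=
        card_le_card fun I hI => by
          obtain ⟨u, hu, huI⟩ := exists_mem_closedNbhdIn_of_mem_maxIndepSets hv hI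
          exact mem_biUnion.mpr ⟨u, hu, mem_filter.mpr ⟨hI, huI⟩⟩
    _ ≤ ∑ u ∈ G.closedNbhdIn W v, #{I ∈ G.maxIndepSets W | u ∈ I} := card_biUnion_le
    _ ≤ _ := sum_le_sum fun u _ => card_filter_mem_maxIndepSets_le W u

theorem card_maxIndepSets_le_of_branching (Ω : Finset α) (b : Finset α → ℝ) (hb : 1 ≤ b ∅)
    (hbranch : ∀ W ⊆ Ω, W.Nonempty → ∃ v ∈ W,
      b (W.erase v) + b (W \ G.closedNbhdIn W v) ≤ b W ∨
      ∑ u ∈ G.closedNbhdIn W v, b (W \ G.closedNbhdIn W u) ≤ b W) :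
    ∀ W ⊆ Ω, (#(G.maxIndepSets W) : ℝ) ≤ b W := by
  intro W
  induction W using Finset.strongInduction with
  | H W ih =>
    intro hW
    obtain rfl | hne := W.eq_empty_or_nonempty
    · exact (Nat.cast_le_one.mpr card_maxIndepSets_empty_le).trans hb
    have hsub : ∀ {u}, u ∈ W → W \ G.closedNbhdIn W u ⊂ W := fun {u} hu =>
      sdiff_ssubset (closedNbhdIn_subset hu) ⟨u, mem_closedNbhdIn_self⟩
    have ih' : ∀ {u}, u ∈ W → (#(G.maxIndepSets (W \ G.closedNbhdIn W u)) : ℝ) ≤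
        b (W \ G.closedNbhdIn W u) := fun hu => ih _ (hsub hu) (sdiff_subset.trans hW)
    obtain ⟨v, hv, h | h⟩ := hbranch W hW hne
    · calc (#(G.maxIndepSets W) : ℝ)
          ≤ #(G.maxIndepSets (W.erase v)) + #(G.maxIndepSets (W \ G.closedNbhdIn W v)) := by
            exact_mod_cast card_maxIndepSets_le_erase_add W v
        _ ≤ b (W.erase v) + b (W \ G.closedNbhdIn W v) :=
            add_le_add (ih _ (erase_ssubset hv) ((erase_subset _ _).trans hW)) (ih' hv)
        _ ≤ b W := h
    · calc (#(G.maxIndepSets W) : ℝ)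
          ≤ ∑ u ∈ G.closedNbhdIn W v, (#(G.maxIndepSets (W \ G.closedNbhdIn W u)) : ℝ) := by
            exact_mod_cast card_maxIndepSets_le_sum hv
        _ ≤ ∑ u ∈ G.closedNbhdIn W v, b (W \ G.closedNbhdIn W u) :=
            sum_le_sum fun u hu => ih' (closedNbhdIn_subset hv hu)
        _ ≤ b W := h

theorem degreeIn_union {A C : Finset α} (h : Disjoint A C) (v : α) :
    G.degreeIn (A ∪ C) v = G.degreeIn A v + G.degreeIn C v := by
  rw [degreeIn, filter_union, card_union_of_disjoint (disjoint_filter_filter h)]; rfl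

theorem degreeIn_sdiff_add {W Ω : Finset α} (h : W ⊆ Ω) (v : α) :
    G.degreeIn (Ω \ W) v + G.degreeIn W v = G.degreeIn Ω v := by
  rw [← degreeIn_union sdiff_disjoint, sdiff_union_of_subset h]

variable (G) in
noncomputable def potential (Ω : Finset α) (D : ℕ) (W : Finset α) : ℝ :=
  ∑ v ∈ W, (12 / 25 + G.degreeIn (Ω \ W) v / (20 * D))

theorem potential_sdiff_le {Ω W R : Finset α} (D : ℕ) (hR : R ⊆ W) (hW : W ⊆ Ω) :
    G.potential Ω D (W \ R) ≤ G.potential Ω D W - ∑ w ∈ R, G.potentialDrop Ω D W w := by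
  set f : α → ℝ := fun v => 12 / 25 + G.degreeIn (Ω \ W) v / (20 * D)
  have hcross : ∑ v ∈ W \ R, (G.degreeIn R v : ℝ) ≤ ∑ w ∈ R, (G.degreeIn W w : ℝ) := by
    rw [← Nat.cast_sum, ← Nat.cast_sum, sum_degreeIn_comm]
    exact_mod_cast sum_le_sum fun w _ => degreeIn_mono sdiff_subset w
  have hremoved : G.potential Ω D (W \ R) =
      ∑ v ∈ W \ R, f v + (∑ v ∈ W \ R, (G.degreeIn R v : ℝ)) / (20 * D) := by
    have hcompl : Ω \ (W \ R) = (Ω \ W) ∪ R := by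
      rw [sdiff_sdiff_right', inf_eq_inter, inter_eq_right.mpr (hR.trans hW), sup_eq_union]
    rw [potential, hcompl, sum_div, ← sum_add_distrib]
    refine sum_congr rfl fun v _ => ?_
    rw [degreeIn_union (disjoint_of_subset_right hR sdiff_disjoint)]
    push_cast
    ring
  have hkept : ∑ w ∈ R, f w - ∑ w ∈ R, G.potentialDrop Ω D W w =
      (∑ w ∈ R, (G.degreeIn W w : ℝ)) / (20 * D) := by
    rw [← sum_sub_distrib, sum_div]
    refine sum_congr rfl fun w _ => ?_
    simp only [f, potentialDrop, ← degreeIn_sdiff_add hW w, Nat.cast_add]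
    ring
  have := div_le_div_of_nonneg_right hcross (by positivity : (0 : ℝ) ≤ 20 * D)
  rw [hremoved, potential, ← sum_sdiff hR]
  linarith

theorem two_rpow_potential_sdiff_le {Ω W R : Finset α} (D : ℕ) (hR : R ⊆ W) (hW : W ⊆ Ω)
    {x y : ℝ} (hx : ∀ w ∈ R, x ≤ G.potentialDrop Ω D W w) (hy : y ≤ #R * x) :
    (2 : ℝ) ^ G.potential Ω D (W \ R) ≤ 2 ^ G.potential Ω D W * 2 ^ (-y) := by
  rw [← Real.rpow_add two_pos]
  refine Real.rpow_le_rpow_of_exponent_le one_le_two ?_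
  have hsum := card_nsmul_le_sum R _ x hx
  rw [nsmul_eq_mul] at hsum
  linarith [G.potential_sdiff_le D hR hW]

theorem two_rpow_potential_erase_add_le {Ω W : Finset α} {D : ℕ} (hD : 10 ^ 4 ≤ D)
    (hdeg : ∀ v ∈ Ω, D ≤ G.degreeIn Ω v ∧ G.degreeIn Ω v ≤ 3 * D) (hW : W ⊆ Ω) {v : α}
    (hv : v ∈ W) (h5 : 5 ≤ G.degreeIn W v) :
    (2 : ℝ) ^ G.potential Ω D (W.erase v) + 2 ^ G.potential Ω D (W \ G.closedNbhdIn W v) ≤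
      2 ^ G.potential Ω D W := by
  have hN := G.closedNbhdIn_subset hv
  have hcard : (#(G.closedNbhdIn W v) : ℝ) = G.degreeIn W v + 1 := by
    exact_mod_cast G.card_closedNbhdIn W v
  have h5' : (5 : ℝ) ≤ G.degreeIn W v := by exact_mod_cast h5
  obtain ⟨y₁, y₂, hy₁, hy₂, hy⟩ : ∃ y₁ y₂ : ℝ, y₁ ≤ G.potentialDrop Ω D W v ∧
      y₂ ≤ #(G.closedNbhdIn W v) * (33 / 100) ∧ (2 : ℝ) ^ (-y₁) + 2 ^ (-y₂) ≤ 1 := by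
    obtain hhalf | hhalf := le_or_gt (2 * G.degreeIn W v) D
    · refine ⟨12 / 25, 99 / 50, potentialDrop_ge_of_two_mul_le (hdeg v (hW hv)).1 hhalf,
        by rw [hcard]; linarith, ?_⟩
      linarith [two_rpow_neg_le (x := 12 / 25) (c := 18 / 25) (a := 12) (q := 25)
          (by norm_num) (by norm_num) (by norm_num) (by norm_num),
        two_rpow_neg_le (x := 99 / 50) (c := 7 / 25) (a := 99) (q := 50)
          (by norm_num) (by norm_num) (by norm_num) (by norm_num)]
    · have : (10 ^ 4 : ℝ) < 2 * G.degreeIn W v := by exact_mod_cast hD.trans_lt hhalf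
      refine ⟨33 / 100, 4, potentialDrop_ge_of_le (by omega) hW (hdeg v (hW hv)).2,
        by rw [hcard]; linarith, ?_⟩
      linarith [two_rpow_neg_le (x := 33 / 100) (c := 15 / 16) (a := 33) (q := 100)
          (by norm_num) (by norm_num) (by norm_num) (by norm_num),
        two_rpow_neg_le (x := 4) (c := 1 / 16) (a := 4) (q := 1)
          (by norm_num) (by norm_num) (by norm_num) (by norm_num)]
  have hlow : ∀ w ∈ G.closedNbhdIn W v, 33 / 100 ≤ G.potentialDrop Ω D W w := fun w hw =>
    potentialDrop_ge_of_le (by omega) hW (hdeg w (hW (hN hw))).2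
  rw [← sdiff_singleton_eq_erase]
  calc (2 : ℝ) ^ G.potential Ω D (W \ {v}) + 2 ^ G.potential Ω D (W \ G.closedNbhdIn W v)
      ≤ 2 ^ G.potential Ω D W * 2 ^ (-y₁) + 2 ^ G.potential Ω D W * 2 ^ (-y₂) :=
        add_le_add (two_rpow_potential_sdiff_le D (singleton_subset_iff.mpr hv) hW
          (by simpa using hy₁) (by simp)) (two_rpow_potential_sdiff_le D hN hW hlow hy₂)
    _ ≤ 2 ^ G.potential Ω D W := by
        rw [← mul_add]
        exact mul_le_of_le_one_right (by positivity) hy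

theorem sum_two_rpow_potential_sdiff_le {Ω W : Finset α} {D : ℕ} (hD : 10 ^ 4 ≤ D)
    (hdeg : ∀ v ∈ Ω, D ≤ G.degreeIn Ω v) (hW : W ⊆ Ω) {v : α} (hv : v ∈ W)
    (hmin : ∀ u ∈ W, G.degreeIn W v ≤ G.degreeIn W u) (hsmall : ∀ u ∈ W, G.degreeIn W u ≤ 4) :
    ∑ u ∈ G.closedNbhdIn W v, (2 : ℝ) ^ G.potential Ω D (W \ G.closedNbhdIn W u) ≤
      2 ^ G.potential Ω D W := by
  set k := G.degreeIn W v + 1 with hk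
  have hbranch : ∀ u ∈ G.closedNbhdIn W v, (2 : ℝ) ^ G.potential Ω D (W \ G.closedNbhdIn W u) ≤
      2 ^ G.potential Ω D W * 2 ^ (-((k : ℝ) * (37 / 70))) := fun u hu => by
    have huW := G.closedNbhdIn_subset hv hu
    refine two_rpow_potential_sdiff_le D (G.closedNbhdIn_subset huW) hW (x := 37 / 70)
      (fun w hw => ?_) ?_
    · have hwW := G.closedNbhdIn_subset huW hw
      exact potentialDrop_ge_of_le_four hD (hdeg w (hW hwW)) (hsmall w hwW)
    · rw [card_closedNbhdIn]
      gcongr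
      exact Nat.succ_le_succ (hmin u huW)
  have hpow := two_rpow_neg_mul_le_one_div (k := k) (by omega) (by have := hsmall v hv; omega)
  calc ∑ u ∈ G.closedNbhdIn W v, (2 : ℝ) ^ G.potential Ω D (W \ G.closedNbhdIn W u)
      ≤ ∑ u ∈ G.closedNbhdIn W v, 2 ^ G.potential Ω D W * 2 ^ (-((k : ℝ) * (37 / 70))) :=
        sum_le_sum hbranch
    _ = k * (2 ^ G.potential Ω D W * 2 ^ (-((k : ℝ) * (37 / 70)))) := by
        rw [sum_const, card_closedNbhdIn, nsmul_eq_mul]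
    _ ≤ k * (2 ^ G.potential Ω D W * (1 / (k : ℝ))) := by gcongr
    _ = 2 ^ G.potential Ω D W := by field_simp [show (k : ℝ) ≠ 0 by positivity]

theorem card_maxIndepSets_le_two_rpow_potential {Ω W : Finset α} {D : ℕ} (hD : 10 ^ 4 ≤ D)
    (hdeg : ∀ v ∈ Ω, D ≤ G.degreeIn Ω v ∧ G.degreeIn Ω v ≤ 3 * D) (hW : W ⊆ Ω) :
    (#(G.maxIndepSets W) : ℝ) ≤ 2 ^ G.potential Ω D W := by
  refine G.card_maxIndepSets_le_of_branching Ω (fun W => 2 ^ G.potential Ω D W)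
    (by simp [potential]) (fun W hW hne => ?_) W hW
  by_cases hsmall : ∀ u ∈ W, G.degreeIn W u ≤ 4
  · obtain ⟨v, hv, hmin⟩ := W.exists_min_image (G.degreeIn W) hne
    exact ⟨v, hv, .inr <|
      sum_two_rpow_potential_sdiff_le hD (fun v hv => (hdeg v hv).1) hW hv hmin hsmall⟩
  · push Not at hsmall
    obtain ⟨v, hv, h5⟩ := hsmall
    exact ⟨v, hv, .inl (two_rpow_potential_erase_add_le hD hdeg hW hv h5)⟩

theorem potential_le {Ω W : Finset α} {D : ℕ} (hW : W ⊆ Ω)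
    (hdeg : ∀ v ∈ Ω, G.degreeIn Ω v ≤ 3 * D) : G.potential Ω D W ≤ 12 / 25 * #Ω := by
  have hcross : ∑ v ∈ W, (G.degreeIn (Ω \ W) v : ℝ) ≤ #(Ω \ W) * (3 * D) := by
    rw [← Nat.cast_sum, sum_degreeIn_comm]
    exact_mod_cast sum_le_card_nsmul _ _ _ fun u hu =>
      (degreeIn_mono hW u).trans (hdeg u (mem_sdiff.mp hu).1)
  have hcard : (#(Ω \ W) : ℝ) + #W = #Ω := by exact_mod_cast card_sdiff_add_card_eq_card hW
  have hedges : (∑ v ∈ W, (G.degreeIn (Ω \ W) v : ℝ)) / (20 * D) ≤ 3 / 20 * #(Ω \ W) := by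
    obtain rfl | hD := D.eq_zero_or_pos
    · simp
    rw [div_le_iff₀ (by positivity)]
    linarith
  rw [potential, sum_add_distrib, sum_const, nsmul_eq_mul, ← sum_div]
  linarith

theorem card_maxIndepSets_le_of_degree_bounds {Ω W : Finset α} {D : ℕ} (hD : 10 ^ 4 ≤ D)
    (hdeg : ∀ v ∈ Ω, D ≤ G.degreeIn Ω v ∧ G.degreeIn Ω v ≤ 3 * D) (hW : W ⊆ Ω) :
    (#(G.maxIndepSets W) : ℝ) ≤ 2 ^ (12 / 25 * #Ω : ℝ) :=
  (card_maxIndepSets_le_two_rpow_potential hD hdeg hW).trans <|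
    Real.rpow_le_rpow_of_exponent_le one_le_two (potential_le hW fun v hv => (hdeg v hv).2)

end SimpleGraph

open SimpleGraph

section LinkGraph

variable {G : Type*} [AddCommGroup G]

-- The loops of `L_S[B]` are not edges here: `linkIndep_iff` deletes the looped vertices instead.
def linkGraph (S : Set G) : SimpleGraph G where
  Adj x y := x ≠ y ∧ (x + y ∈ S ∨ x - y ∈ S ∪ -S)
  symm := ⟨fun x y ⟨hne, h⟩ => ⟨hne.symm, by
    simp only [Set.mem_union, Set.mem_neg, neg_sub] at h ⊢
    rw [add_comm]
    tauto⟩⟩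
  loopless := ⟨fun _ h => h.1 rfl⟩

theorem linkIndep_iff {S B I : Set G} (hB : ∀ x ∈ B, x ∉ (S + S) ∪ (S - S)) :
    LinkIndep S B I ↔ I ⊆ {x | x ∈ B ∧ x + x ∉ S} ∧ (linkGraph S).IsIndepSet I := by
  refine ⟨fun ⟨hIB, hloop, hpair⟩ => ⟨fun x hx => ⟨hIB hx, fun h => hloop x hx (.inl h)⟩,
    fun x hx y hy hne h => hpair x hx y hy hne h.2⟩, fun ⟨hI, hind⟩ => ⟨fun x hx => (hI hx).1,
    fun x hx h => ?_, fun x hx y hy hne h => hind hx hy hne ⟨hne, h⟩⟩⟩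
  rcases h with h | h
  · exact (hI hx).2 h
  · exact hB x (hI hx).1 h

theorem linkMIS_le_card_maxIndepSets {S B : Set G} {W : Finset G}
    (hB : ∀ x ∈ B, x ∉ (S + S) ∪ (S - S)) (hW : (W : Set G) = {x | x ∈ B ∧ x + x ∉ S}) :
    linkMIS S B ≤ #((linkGraph S).maxIndepSets W) := by
  have hmax : {I : Set G | LinkIndep S B I ∧ ∀ J, LinkIndep S B J → I ⊆ J → I = J} ⊆
      (↑) '' ((linkGraph S).maxIndepSets W : Set (Finset G)) := by
    rintro I ⟨hI, hImax⟩
    rw [linkIndep_iff hB, ← hW] at hI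
    have hfin := W.finite_toSet.subset hI.1
    refine ⟨hfin.toFinset, mem_maxIndepSets.mpr ⟨?_, fun K hK hIK => ?_⟩, hfin.coe_toFinset⟩
    · exact ⟨by rw [← coe_subset, hfin.coe_toFinset]; exact hI.1,
        by rw [hfin.coe_toFinset]; exact hI.2⟩
    · rw [← coe_subset, hfin.coe_toFinset] at hIK ⊢
      have hK' : LinkIndep S B K := (linkIndep_iff hB).mpr ⟨hW ▸ coe_subset.mpr hK.1, hK.2⟩
      exact (hImax _ hK' hIK).symm.subset
  calc linkMIS S B = {I : Set G | LinkIndep S B I ∧ ∀ J, LinkIndep S B J → I ⊆ J → I = J}.ncard :=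
        (Nat.card_coe_set_eq _)
    _ ≤ ((↑) '' ((linkGraph S).maxIndepSets W : Set (Finset G))).ncard :=
        Set.ncard_le_ncard hmax ((finite_toSet _).image _)
    _ ≤ #((linkGraph S).maxIndepSets W) :=
        (Set.ncard_image_le (finite_toSet _)).trans_eq (Set.ncard_coe_finset _)

theorem ncard_le_degreeIn_linkGraph {S : Set G} [DecidableRel (linkGraph S).Adj] {Ω : Finset G}
    {v : G} (hS : (0 : G) ∉ S) (hΩ : ∀ s ∈ S, v + s ∈ Ω) :
    S.ncard ≤ (linkGraph S).degreeIn Ω v := by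
  rw [degreeIn, ← Set.ncard_coe_finset]
  refine Set.ncard_le_ncard_of_injOn (v + ·) (fun s hs => ?_) (add_right_injective v).injOn
    (finite_toSet _)
  refine mem_coe.mpr (mem_filter.mpr ⟨hΩ s hs, fun h => hS ?_, .inr (.inr ?_)⟩)
  · rwa [left_eq_add.mp h] at hs
  · simpa using hs

theorem degreeIn_linkGraph_le {S : Set G} [DecidableRel (linkGraph S).Adj] (hS : S.Finite)
    (Ω : Finset G) (v : G) : (linkGraph S).degreeIn Ω v ≤ 3 * S.ncard := by
  have hsub : (({u ∈ Ω | (linkGraph S).Adj v u} : Finset G) : Set G) ⊆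
      (· - v) '' S ∪ (v - ·) '' S ∪ (v + ·) '' S := by
    intro u hu
    obtain ⟨-, -, h | h | h⟩ := mem_filter.mp (mem_coe.mp hu)
    · exact .inl (.inl ⟨v + u, h, add_sub_cancel_left v u⟩)
    · exact .inl (.inr ⟨v - u, h, sub_sub_cancel v u⟩)
    · exact .inr ⟨-(v - u), h, by simp⟩
  rw [degreeIn, ← Set.ncard_coe_finset]
  have h1 := Set.ncard_image_le (f := (· - v)) hS
  have h2 := Set.ncard_image_le (f := (v - ·)) hS
  have h3 := Set.ncard_image_le (f := (v + ·)) hS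
  have hu := Set.ncard_union_le ((· - v) '' S ∪ (v - ·) '' S) ((v + ·) '' S)
  have hu' := Set.ncard_union_le ((· - v) '' S) ((v - ·) '' S)
  have hle := Set.ncard_le_ncard hsub (((hS.image _).union (hS.image _)).union (hS.image _))
  omega

end LinkGraph

theorem AddSubgroup.add_union_sub_subset {G : Type*} [AddGroup G] {H : AddSubgroup G}
    {S : Set G} (hS : S ⊆ H) : (S + S) ∪ (S - S) ⊆ H := by
  rintro x (⟨a, ha, b, hb, rfl⟩ | ⟨a, ha, b, hb, rfl⟩)
  · exact H.add_mem (hS ha) (hS hb)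
  · exact H.sub_mem (hS ha) (hS hb)

theorem AddSubgroup.two_mul_ncard_compl {G : Type*} [AddGroup G] [Finite G] {H : AddSubgroup G}
    (hH : H.index = 2) : 2 * (H : Set G)ᶜ.ncard = Nat.card G := by
  have hH' := H.card_mul_index
  have hcompl := Set.ncard_add_ncard_compl (H : Set G)
  rw [hH] at hH'
  rw [← Nat.card_coe_set_eq] at hcompl
  change Nat.card H + _ = _ at hcompl
  omega

/-- If `B` is the nontrivial coset of an index-2 subgroup of a large finite abelian
group `G` of order `n` and `S ⊆ H` is sum-free with `|S| ≥ 10⁴`, then the link graph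
`L_S[B]` has at most `2 ^ (0.24 n)` maximal independent sets. -/
theorem mis_of_link_graph_of_large_generating_set :
    ∃ n₀ : ℕ, ∀ (G : Type) [AddCommGroup G] [Fintype G],
      Fintype.card G ≥ n₀ →
      ∀ (H : AddSubgroup G), H.index = 2 →
      ∀ (B : Set G), B = (H : Set G)ᶜ →
      ∀ (S : Set G), S ⊆ (H : Set G) → IsSumFree S → S.ncard ≥ 10 ^ 4 →
      (linkMIS S B : ℝ) ≤ 2 ^ ((0.24 : ℝ) * Fintype.card G) := by
  refine ⟨0, fun G _ _ _ H hH B hB S hSH hSF hS => ?_⟩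
  classical
  subst hB
  have hSS : ∀ x ∈ (H : Set G)ᶜ, x ∉ (S + S) ∪ (S - S) := fun x hx h =>
    hx (AddSubgroup.add_union_sub_subset hSH h)
  set Ω := (H : Set G)ᶜ.toFinset
  have hdeg : ∀ v ∈ Ω, S.ncard ≤ (linkGraph S).degreeIn Ω v ∧
      (linkGraph S).degreeIn Ω v ≤ 3 * S.ncard := fun v hv =>
    ⟨ncard_le_degreeIn_linkGraph (fun h0 => hSF 0 h0 0 h0 (by rwa [add_zero]))
      fun s hs => by simpa [Ω, H.add_mem_cancel_right (hSH hs)] using hv,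
      degreeIn_linkGraph_le S.toFinite Ω v⟩
  have hcard : 2 * #Ω = Fintype.card G := by
    rw [← Set.ncard_eq_toFinset_card', ← Nat.card_eq_fintype_card]
    exact AddSubgroup.two_mul_ncard_compl hH
  calc (linkMIS S (H : Set G)ᶜ : ℝ)
      ≤ #((linkGraph S).maxIndepSets {x ∈ Ω | x + x ∉ S}) := by
        exact_mod_cast linkMIS_le_card_maxIndepSets hSS (by ext; simp [Ω])
    _ ≤ 2 ^ (12 / 25 * #Ω : ℝ) :=
        card_maxIndepSets_le_of_degree_bounds hS hdeg (filter_subset _ _)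
    _ = 2 ^ ((0.24 : ℝ) * Fintype.card G) := by
        rw [← hcard]
        push_cast
        ring_nf
end

section
/- Let t ≥ 1, let G = (ℤ/2ℤ)^t × ℤ/4ℤ, and let e = (0, 2) ∈ G be the element whose (ℤ/2ℤ)^t-coordinate is 0 and whose ℤ/4ℤ-coordinate is 2. Let B = {(v, j) ∈ G : j ∈ {1, 3}}, and let S ⊆ {(v, j) ∈ G : j ∈ {0, 2}} be a sum-free set with e ∉ S. Set S* = S ∪ (e + S). Then for every x ∈ B, the number of y ∈ B with y ≠ x and (x + y ∈ S or x − y ∈ S ∪ (−S)) equals |S*|; that is, the link graph L_S[B] is |S*|-regular. -/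
open Pointwise

/-- In `G = (ℤ/2ℤ)^t × ℤ/4ℤ` with `e = (0,2)`, `B` the set of elements with odd
`ℤ/4ℤ`-coordinate and `S` a sum-free subset of the elements with even
`ℤ/4ℤ`-coordinate not containing `e`, the link graph `L_S[B]` is `|S*|`-regular,
where `S* = S ∪ (e + S)`. -/
theorem link_graph_regular_case1_Z2t_Z4
    (t : ℕ) (ht : 1 ≤ t)
    (e : (Fin t → ZMod 2) × ZMod 4) (he : e = (0, 2))
    (B : Set ((Fin t → ZMod 2) × ZMod 4)) (hB : B = {p | p.2 = 1 ∨ p.2 = 3})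
    (S : Set ((Fin t → ZMod 2) × ZMod 4)) (hSsub : S ⊆ {p | p.2 = 0 ∨ p.2 = 2})
    (hSF : IsSumFree S) (heS : e ∉ S)
    (Sstar : Set ((Fin t → ZMod 2) × ZMod 4)) (hstar : Sstar = S ∪ (e + ·) '' S) :
    ∀ x ∈ B,
      {y ∈ B | y ≠ x ∧ (x + y ∈ S ∨ x - y ∈ S ∪ -S)}.ncard = Sstar.ncard := by
  subst he hB hstar
  intro x hx
  have hx4 : x.2 = 1 ∨ x.2 = 3 := hx
  have hx2 : x + x = ((0 : Fin t → ZMod 2), (2 : ZMod 4)) := by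
    refine Prod.ext (funext fun i => ?_) ?_
    · show x.1 i + x.1 i = 0
      generalize x.1 i = a; revert a; decide
    · show x.2 + x.2 = 2
      rcases hx4 with h | h <;> rw [h] <;> decide
  have he2 : ((0 : Fin t → ZMod 2), (2 : ZMod 4)) + ((0 : Fin t → ZMod 2), (2 : ZMod 4))
      = (0 : (Fin t → ZMod 2) × ZMod 4) := by
    refine Prod.ext (funext fun i => ?_) ?_
    · show (0 : ZMod 2) + 0 = 0; decide
    · show (2 : ZMod 4) + 2 = 0; decide
  have h2S : ∀ s ∈ S, s + s = (0 : (Fin t → ZMod 2) × ZMod 4) := by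
    intro s hs
    have hs2 : s.2 = 0 ∨ s.2 = 2 := hSsub hs
    refine Prod.ext (funext fun i => ?_) ?_
    · show s.1 i + s.1 i = 0
      generalize s.1 i = a; revert a; decide
    · show s.2 + s.2 = 0
      rcases hs2 with h | h <;> rw [h] <;> decide
  have h0S : (0 : (Fin t → ZMod 2) × ZMod 4) ∉ S := fun h => hSF 0 h 0 h (by simpa using h)
  have key : {y ∈ {p : (Fin t → ZMod 2) × ZMod 4 | p.2 = 1 ∨ p.2 = 3} |
        y ≠ x ∧ (x + y ∈ S ∨ x - y ∈ S ∪ -S)}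
      = (fun s => x + s) ''
        (S ∪ (fun s => ((0 : Fin t → ZMod 2), (2 : ZMod 4)) + s) '' S) := by
    ext y
    simp only [Set.mem_setOf_eq, Set.mem_sep_iff, Set.mem_union, Set.mem_neg, Set.mem_image]
    constructor
    · rintro ⟨hyB, hyx, hc⟩
      rcases hc with h | h | h
      · exact ⟨((0 : Fin t → ZMod 2), (2 : ZMod 4)) + (x + y),
          Or.inr ⟨x + y, h, rfl⟩, by linear_combination hx2 + he2⟩
      · refine ⟨y - x, Or.inl ?_, by ring⟩
        have : y - x = x - y := by linear_combination -h2S (x - y) h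
        rw [this]; exact h
      · refine ⟨y - x, Or.inl ?_, by ring⟩
        rw [← neg_sub x y]; exact h
    · rintro ⟨a, ha, rfl⟩
      have ha2 : a.2 = 0 ∨ a.2 = 2 := by
        rcases ha with hA | ⟨s, hs, hes⟩
        · exact hSsub hA
        · have hs2 : s.2 = 0 ∨ s.2 = 2 := hSsub hs
          have : a.2 = 2 + s.2 := by rw [← hes]; rfl
          rcases hs2 with h | h <;> rw [this, h]
          · right; decide
          · left; decide
      refine ⟨?_, ?_, ?_⟩
      · show x.2 + a.2 = 1 ∨ x.2 + a.2 = 3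
        rcases hx4 with h | h <;> rcases ha2 with h' | h' <;> rw [h, h'] <;> decide
      · intro hcontra
        have ha0 : a = 0 := by linear_combination hcontra
        rcases ha with hA | ⟨s, hs, hes⟩
        · exact h0S (ha0 ▸ hA)
        · have hse : s = ((0 : Fin t → ZMod 2), (2 : ZMod 4)) := by
            linear_combination hes + ha0 - he2
          exact heS (hse ▸ hs)
      · rcases ha with hA | ⟨s, hs, hes⟩
        · right; left
          have : x - (x + a) = a := by linear_combination -h2S a hA
          rw [this]; exact hA
        · left
          have : x + (x + a) = s := by linear_combination hx2 + he2 - hes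
          rw [this]; exact hs
  rw [key, Set.ncard_image_of_injective _ (add_right_injective x)]
end

section
/- Let t ≥ 1, let G = ℤ/2ℤ × (ℤ/2ℤ)^{t−1} × ℤ/4ℤ, and let e = (0, 0, 2) ∈ G. Let B = {g ∈ G : the first coordinate of g is 1}, B₀ = {g ∈ B : the ℤ/4ℤ-coordinate of g lies in {0, 2}}, and B₁ = B \ B₀. Let S ⊆ {g ∈ G : the first coordinate of g is 0} be sum-free with e ∉ S; set S₀ = {s ∈ S : the ℤ/4ℤ-coordinate of s lies in {0, 2}}, S₁ = S \ S₀, S₀* = S₀ ∪ (e + S₀) and S₁* = S₁ ∪ (e + S₁). Write x ~ y if x ≠ y and (x + y ∈ S or x − y ∈ S ∪ (−S)). Then: (a) for every x ∈ B₀, {y ∈ B₀ : x ~ y} = x + S₀; (b) for every x ∈ B₁, {y ∈ B₁ : x ~ y} = x + S₀*; (c) for every x ∈ B₀, {y ∈ B₁ : x ~ y} = x + S₁*, and for every x ∈ B₁, {y ∈ B₀ : x ~ y} = x + S₁*; (d) there do not exist three pairwise ~-adjacent elements of B₀. -/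
open Pointwise

private lemma self_add_aux {n : ℕ} (g : ZMod 2 × (Fin n → ZMod 2) × ZMod 4) :
    g + g = (0, 0, g.2.2 + g.2.2) := by
  have h2 : ∀ a : ZMod 2, a + a = 0 := by decide
  exact Prod.ext (h2 _) (Prod.ext (funext fun i => h2 _) rfl)

/-- Neighbourhood structure of the link graph `L_S[B]` in
`G = ℤ/2ℤ × (ℤ/2ℤ)^(t-1) × ℤ/4ℤ`, Case 2 of the `ℤ₂^t ⊕ ℤ₄` analysis:
(a) within `B₀` neighbourhoods are translates of `S₀`; (b) within `B₁` they are
translates of `S₀* = S₀ ∪ (e + S₀)`; (c) across the pair `(B₀, B₁)` they are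
translates of `S₁* = S₁ ∪ (e + S₁)`; and (d) the graph induced on `B₀` is
triangle-free. -/
theorem link_graph_structure_case2_Z2t_Z4
    (t : ℕ) (ht : 1 ≤ t)
    (e : ZMod 2 × (Fin (t - 1) → ZMod 2) × ZMod 4) (he : e = (0, 0, 2))
    (B B₀ B₁ : Set (ZMod 2 × (Fin (t - 1) → ZMod 2) × ZMod 4))
    (hB : B = {g | g.1 = 1})
    (hB₀ : B₀ = {g ∈ B | g.2.2 = 0 ∨ g.2.2 = 2})
    (hB₁ : B₁ = B \ B₀)
    (S : Set (ZMod 2 × (Fin (t - 1) → ZMod 2) × ZMod 4))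
    (hSsub : S ⊆ {g | g.1 = 0}) (hSF : IsSumFree S) (heS : e ∉ S)
    (S₀ S₁ S₀s S₁s : Set (ZMod 2 × (Fin (t - 1) → ZMod 2) × ZMod 4))
    (hS₀ : S₀ = {s ∈ S | s.2.2 = 0 ∨ s.2.2 = 2})
    (hS₁ : S₁ = S \ S₀)
    (hS₀s : S₀s = S₀ ∪ (e + ·) '' S₀)
    (hS₁s : S₁s = S₁ ∪ (e + ·) '' S₁)
    (r : (ZMod 2 × (Fin (t - 1) → ZMod 2) × ZMod 4) →
      (ZMod 2 × (Fin (t - 1) → ZMod 2) × ZMod 4) → Prop)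
    (hr : ∀ x y, r x y ↔ x ≠ y ∧ (x + y ∈ S ∨ x - y ∈ S ∪ -S)) :
    (∀ x ∈ B₀, {y ∈ B₀ | r x y} = (x + ·) '' S₀) ∧
    (∀ x ∈ B₁, {y ∈ B₁ | r x y} = (x + ·) '' S₀s) ∧
    (∀ x ∈ B₀, {y ∈ B₁ | r x y} = (x + ·) '' S₁s) ∧
    (∀ x ∈ B₁, {y ∈ B₀ | r x y} = (x + ·) '' S₁s) ∧
    ¬ ∃ x ∈ B₀, ∃ y ∈ B₀, ∃ z ∈ B₀, r x y ∧ r y z ∧ r x z := by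
  subst hB₁ hB₀ hB hS₁s hS₀s hS₁ hS₀
  -- basic facts about e
  have he3 : e.2.2 = 2 := by rw [he]
  have he1 : e.1 = 0 := by rw [he]
  have hee : e + e = 0 := by
    rw [self_add_aux e]
    refine Prod.ext rfl (Prod.ext rfl ?_)
    show e.2.2 + e.2.2 = (0 : ZMod 4)
    rw [he3]; decide
  have hnege : -e = e := neg_eq_of_add_eq_zero_left hee
  -- parity facts in ZMod 4
  have ev : ∀ a b : ZMod 4, (a = 0 ∨ a = 2) → (b = 0 ∨ b = 2) →
      (a + b = 0 ∨ a + b = 2) := by decide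
  have evodd : ∀ a b : ZMod 4, (a = 0 ∨ a = 2) → ¬(b = 0 ∨ b = 2) →
      ¬(a + b = 0 ∨ a + b = 2) := by decide
  have oddev : ∀ a b : ZMod 4, ¬(a = 0 ∨ a = 2) → (b = 0 ∨ b = 2) →
      ¬(a + b = 0 ∨ a + b = 2) := by decide
  have oddodd : ∀ a b : ZMod 4, ¬(a = 0 ∨ a = 2) → ¬(b = 0 ∨ b = 2) →
      (a + b = 0 ∨ a + b = 2) := by decide
  have subev : ∀ a b : ZMod 4, ¬(a = 0 ∨ a = 2) → ¬(b = 0 ∨ b = 2) →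
      (a - b = 0 ∨ a - b = 2) := by decide
  have subodd : ∀ a b : ZMod 4, (a = 0 ∨ a = 2) → ¬(b = 0 ∨ b = 2) →
      ¬(a - b = 0 ∨ a - b = 2) := by decide
  have subodd' : ∀ a b : ZMod 4, ¬(a = 0 ∨ a = 2) → (b = 0 ∨ b = 2) →
      ¬(a - b = 0 ∨ a - b = 2) := by decide
  -- doubling
  have sq0 : ∀ g : ZMod 2 × (Fin (t - 1) → ZMod 2) × ZMod 4,
      (g.2.2 = 0 ∨ g.2.2 = 2) → g + g = 0 := by
    intro g hg
    rw [self_add_aux]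
    refine Prod.ext rfl (Prod.ext rfl ?_)
    have : ∀ a : ZMod 4, (a = 0 ∨ a = 2) → a + a = 0 := by decide
    exact this _ hg
  have sqe : ∀ g : ZMod 2 × (Fin (t - 1) → ZMod 2) × ZMod 4,
      ¬(g.2.2 = 0 ∨ g.2.2 = 2) → g + g = e := by
    intro g hg
    rw [self_add_aux, he]
    refine Prod.ext rfl (Prod.ext rfl ?_)
    have : ∀ a : ZMod 4, ¬(a = 0 ∨ a = 2) → a + a = 2 := by decide
    exact this _ hg
  have hneg0 : ∀ g : ZMod 2 × (Fin (t - 1) → ZMod 2) × ZMod 4,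
      (g.2.2 = 0 ∨ g.2.2 = 2) → -g = g := fun g h => neg_eq_of_add_eq_zero_left (sq0 g h)
  have hnegE : ∀ g : ZMod 2 × (Fin (t - 1) → ZMod 2) × ZMod 4,
      ¬(g.2.2 = 0 ∨ g.2.2 = 2) → -g = g + e := by
    intro g h
    refine neg_eq_of_add_eq_zero_right ?_
    rw [← add_assoc, sqe g h, hee]
  have Lc : ∀ (a b c : ZMod 2 × (Fin (t - 1) → ZMod 2) × ZMod 4),
      a + a = c → a + (a + b) = c + b := by
    intro a b c h; rw [← add_assoc, h]
  have h0S : (0 : ZMod 2 × (Fin (t - 1) → ZMod 2) × ZMod 4) ∉ S := by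
    intro h
    exact hSF 0 h 0 h (by rwa [add_zero])
  -- adjacency within even fibres gives x + y ∈ S
  have hadjS : ∀ x y : ZMod 2 × (Fin (t - 1) → ZMod 2) × ZMod 4,
      (x.2.2 = 0 ∨ x.2.2 = 2) → (y.2.2 = 0 ∨ y.2.2 = 2) → r x y → x + y ∈ S := by
    intro x y hx2 hy2 hxy
    rw [hr] at hxy
    obtain ⟨-, h⟩ := hxy
    rcases h with h | h
    · exact h
    · rw [sub_eq_add_neg, hneg0 y hy2] at h
      rcases h with h | h
      · exact h
      · rw [Set.mem_neg, hneg0 _ (ev _ _ hx2 hy2)] at h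
        exact h
  -- generic unfolding of adjacency
  have hadj3 : ∀ x y : ZMod 2 × (Fin (t - 1) → ZMod 2) × ZMod 4,
      r x y → x + y ∈ S ∨ x - y ∈ S ∨ y - x ∈ S := by
    intro x y hxy
    rw [hr] at hxy
    obtain ⟨-, h⟩ := hxy
    rcases h with h | h
    · exact Or.inl h
    · rcases h with h | h
      · exact Or.inr (Or.inl h)
      · rw [Set.mem_neg, neg_sub] at h
        exact Or.inr (Or.inr h)
  refine ⟨?_, ?_, ?_, ?_, ?_⟩
  -- (a)
  · intro x hx
    obtain ⟨hxB, hx2⟩ := hx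
    have hx1 : x.1 = 1 := hxB
    have hxx : x + x = 0 := sq0 x hx2
    ext y
    simp only [Set.mem_setOf_eq, Set.mem_image, Set.mem_union, Set.mem_diff]
    constructor
    · rintro ⟨⟨hyB, hy2⟩, hrxy⟩
      have hS : x + y ∈ S := hadjS x y hx2 hy2 hrxy
      exact ⟨x + y, ⟨hS, ev _ _ hx2 hy2⟩, by rw [Lc x y 0 hxx, zero_add]⟩
    · rintro ⟨s, ⟨hsS, hs2⟩, rfl⟩
      have hs1 : s.1 = 0 := hSsub hsS
      refine ⟨⟨?_, ev _ _ hx2 hs2⟩, ?_⟩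
      · show (x + s).1 = 1
        rw [Prod.fst_add, hx1, hs1, add_zero]
      · rw [hr]
        refine ⟨?_, Or.inl ?_⟩
        · intro h
          have hs0 : s = 0 := left_eq_add.mp h
          exact h0S (hs0 ▸ hsS)
        · rw [Lc x s 0 hxx, zero_add]; exact hsS
  -- (b)
  · intro x hx
    obtain ⟨hxB, hxn⟩ := hx
    have hx1 : x.1 = 1 := hxB
    have hx2 : ¬(x.2.2 = 0 ∨ x.2.2 = 2) := fun h => hxn ⟨hxB, h⟩
    have hxx : x + x = e := sqe x hx2
    ext y
    simp only [Set.mem_setOf_eq, Set.mem_image, Set.mem_union, Set.mem_diff]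
    constructor
    · rintro ⟨⟨hyB, hyn⟩, hrxy⟩
      have hy2 : ¬(y.2.2 = 0 ∨ y.2.2 = 2) := fun h => hyn ⟨hyB, h⟩
      rcases hadj3 x y hrxy with h | h | h
      · refine ⟨e + (x + y), Or.inr ⟨x + y, ⟨h, oddodd _ _ hx2 hy2⟩, rfl⟩, ?_⟩
        rw [add_left_comm x e (x + y), Lc x y e hxx, Lc e y 0 hee, zero_add]
      · refine ⟨x - y, Or.inl ⟨h, subev _ _ hx2 hy2⟩, ?_⟩
        rw [sub_eq_add_neg, hnegE y hy2, Lc x (y + e) e hxx, add_comm y e,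
          Lc e y 0 hee, zero_add]
      · exact ⟨y - x, Or.inl ⟨h, subev _ _ hy2 hx2⟩, by abel⟩
    · rintro ⟨s, hs, rfl⟩
      rcases hs with ⟨hsS, hs2⟩ | ⟨s, ⟨hsS, hs2⟩, rfl⟩
      · have hs1 : s.1 = 0 := hSsub hsS
        refine ⟨⟨?_, fun hc => oddev _ _ hx2 hs2 hc.2⟩, ?_⟩
        · show (x + s).1 = 1
          rw [Prod.fst_add, hx1, hs1, add_zero]
        · rw [hr]
          refine ⟨?_, Or.inr (Set.mem_union_left _ ?_)⟩
          · intro h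
            have hs0 : s = 0 := left_eq_add.mp h
            exact h0S (hs0 ▸ hsS)
          · have h' : x - (x + s) = -s := by abel
            rw [h', hneg0 s hs2]
            exact hsS
      · have hs1 : s.1 = 0 := hSsub hsS
        have hes2 : ((e + s).2.2 = 0 ∨ (e + s).2.2 = 2) := ev _ _ (Or.inr he3) hs2
        refine ⟨⟨?_, fun hc => oddev _ _ hx2 hes2 hc.2⟩, ?_⟩
        · show (x + (e + s)).1 = 1
          rw [Prod.fst_add, Prod.fst_add, hx1, he1, hs1, add_zero, add_zero]
        · rw [hr]
          refine ⟨?_, Or.inl ?_⟩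
          · intro h
            have h0 : e + s = 0 := left_eq_add.mp h
            have hse : s = e := by
              rw [← hnege]; exact (neg_eq_of_add_eq_zero_right h0).symm
            exact heS (hse ▸ hsS)
          · rw [Lc x (e + s) e hxx, Lc e s 0 hee, zero_add]
            exact hsS
  -- (c)
  · intro x hx
    obtain ⟨hxB, hx2⟩ := hx
    have hx1 : x.1 = 1 := hxB
    have hxx : x + x = 0 := sq0 x hx2
    ext y
    simp only [Set.mem_setOf_eq, Set.mem_image, Set.mem_union, Set.mem_diff]
    constructor
    · rintro ⟨⟨hyB, hyn⟩, hrxy⟩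
      have hy2 : ¬(y.2.2 = 0 ∨ y.2.2 = 2) := fun h => hyn ⟨hyB, h⟩
      rcases hadj3 x y hrxy with h | h | h
      · refine ⟨x + y, Or.inl ⟨h, fun hc => evodd _ _ hx2 hy2 hc.2⟩, ?_⟩
        rw [Lc x y 0 hxx, zero_add]
      · refine ⟨e + (x - y), Or.inr ⟨x - y, ⟨h, fun hc => subodd _ _ hx2 hy2 hc.2⟩, rfl⟩, ?_⟩
        rw [sub_eq_add_neg, hnegE y hy2, add_left_comm x e (x + (y + e)),
          Lc x (y + e) 0 hxx, zero_add, add_comm y e, Lc e y 0 hee, zero_add]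
      · exact ⟨y - x, Or.inl ⟨h, fun hc => subodd' _ _ hy2 hx2 hc.2⟩, by abel⟩
    · rintro ⟨s, hs, rfl⟩
      rcases hs with ⟨hsS, hsn⟩ | ⟨s, ⟨hsS, hsn⟩, rfl⟩
      · have hs1 : s.1 = 0 := hSsub hsS
        have hs2 : ¬(s.2.2 = 0 ∨ s.2.2 = 2) := fun h => hsn ⟨hsS, h⟩
        refine ⟨⟨?_, fun hc => evodd _ _ hx2 hs2 hc.2⟩, ?_⟩
        · show (x + s).1 = 1
          rw [Prod.fst_add, hx1, hs1, add_zero]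
        · rw [hr]
          refine ⟨?_, Or.inr (Set.mem_union_right _ ?_)⟩
          · intro h
            have hs0 : s = 0 := left_eq_add.mp h
            exact h0S (hs0 ▸ hsS)
          · rw [Set.mem_neg]
            have h' : -(x - (x + s)) = s := by abel
            rw [h']
            exact hsS
      · have hs1 : s.1 = 0 := hSsub hsS
        have hs2 : ¬(s.2.2 = 0 ∨ s.2.2 = 2) := fun h => hsn ⟨hsS, h⟩
        have hes2 : ¬((e + s).2.2 = 0 ∨ (e + s).2.2 = 2) := evodd _ _ (Or.inr he3) hs2
        refine ⟨⟨?_, fun hc => evodd _ _ hx2 hes2 hc.2⟩, ?_⟩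
        · show (x + (e + s)).1 = 1
          rw [Prod.fst_add, Prod.fst_add, hx1, he1, hs1, add_zero, add_zero]
        · rw [hr]
          refine ⟨?_, Or.inr (Set.mem_union_left _ ?_)⟩
          · intro h
            have h0 : e + s = 0 := left_eq_add.mp h
            have hse : s = e := by
              rw [← hnege]; exact (neg_eq_of_add_eq_zero_right h0).symm
            exact heS (hse ▸ hsS)
          · have h' : x - (x + (e + s)) = -(e + s) := by abel
            rw [h', hnegE _ hes2, add_right_comm, hee, zero_add]
            exact hsS
  -- (c')
  · intro x hx
    obtain ⟨hxB, hxn⟩ := hx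
    have hx1 : x.1 = 1 := hxB
    have hx2 : ¬(x.2.2 = 0 ∨ x.2.2 = 2) := fun h => hxn ⟨hxB, h⟩
    have hxx : x + x = e := sqe x hx2
    ext y
    simp only [Set.mem_setOf_eq, Set.mem_image, Set.mem_union, Set.mem_diff]
    constructor
    · rintro ⟨⟨hyB, hy2⟩, hrxy⟩
      rcases hadj3 x y hrxy with h | h | h
      · refine ⟨e + (x + y), Or.inr ⟨x + y, ⟨h, fun hc => oddev _ _ hx2 hy2 hc.2⟩, rfl⟩, ?_⟩
        rw [add_left_comm x e (x + y), Lc x y e hxx, Lc e y 0 hee, zero_add]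
      · refine ⟨e + (x - y), Or.inr ⟨x - y, ⟨h, fun hc => subodd' _ _ hx2 hy2 hc.2⟩, rfl⟩, ?_⟩
        rw [sub_eq_add_neg, hneg0 y hy2, add_left_comm x e (x + y),
          Lc x y e hxx, Lc e y 0 hee, zero_add]
      · exact ⟨y - x, Or.inl ⟨h, fun hc => subodd _ _ hy2 hx2 hc.2⟩, by abel⟩
    · rintro ⟨s, hs, rfl⟩
      rcases hs with ⟨hsS, hsn⟩ | ⟨s, ⟨hsS, hsn⟩, rfl⟩
      · have hs1 : s.1 = 0 := hSsub hsS
        have hs2 : ¬(s.2.2 = 0 ∨ s.2.2 = 2) := fun h => hsn ⟨hsS, h⟩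
        refine ⟨⟨?_, oddodd _ _ hx2 hs2⟩, ?_⟩
        · show (x + s).1 = 1
          rw [Prod.fst_add, hx1, hs1, add_zero]
        · rw [hr]
          refine ⟨?_, Or.inr (Set.mem_union_right _ ?_)⟩
          · intro h
            have hs0 : s = 0 := left_eq_add.mp h
            exact h0S (hs0 ▸ hsS)
          · rw [Set.mem_neg]
            have h' : -(x - (x + s)) = s := by abel
            rw [h']
            exact hsS
      · have hs1 : s.1 = 0 := hSsub hsS
        have hs2 : ¬(s.2.2 = 0 ∨ s.2.2 = 2) := fun h => hsn ⟨hsS, h⟩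
        have hes2 : ¬((e + s).2.2 = 0 ∨ (e + s).2.2 = 2) := evodd _ _ (Or.inr he3) hs2
        refine ⟨⟨?_, oddodd _ _ hx2 hes2⟩, ?_⟩
        · show (x + (e + s)).1 = 1
          rw [Prod.fst_add, Prod.fst_add, hx1, he1, hs1, add_zero, add_zero]
        · rw [hr]
          refine ⟨?_, Or.inr (Set.mem_union_left _ ?_)⟩
          · intro h
            have h0 : e + s = 0 := left_eq_add.mp h
            have hse : s = e := by
              rw [← hnege]; exact (neg_eq_of_add_eq_zero_right h0).symm
            exact heS (hse ▸ hsS)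
          · have h' : x - (x + (e + s)) = -(e + s) := by abel
            rw [h', hnegE _ hes2, add_right_comm, hee, zero_add]
            exact hsS
  -- (d)
  · rintro ⟨x, ⟨hxB, hx2⟩, y, ⟨hyB, hy2⟩, z, ⟨hzB, hz2⟩, hxy, hyz, hxz⟩
    have s1 := hadjS x y hx2 hy2 hxy
    have s2 := hadjS y z hy2 hz2 hyz
    have s3 := hadjS x z hx2 hz2 hxz
    refine hSF _ s1 _ s2 ?_
    have h' : (x + y) + (y + z) = (x + z) + (y + y) := by abel
    rw [h', sq0 y hy2, add_zero]
    exact s3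
end

section
/- Let H be a finite abelian group of odd order and let G = ℤ/5ℤ × H. For a ∈ ℤ/5ℤ, let G_a = {a} × H. Let S ⊆ G₀ ∪ G₁ ∪ G₄ be a sum-free set and set S_a = S ∩ G_a for each a. Then for each i ∈ {2, 3} and every x ∈ G_i, writing j for the other element of {2, 3} and 2i for the product taken mod 5 (so S_{2i} = S₄ when i = 2 and S_{2i} = S₁ when i = 3, and S_{−2i} = S₁ when i = 2 and S_{−2i} = S₄ when i = 3): (a) |{y ∈ G_i : x − y ∈ S₀ ∪ (−S₀)}| = |S₀ ∪ (−S₀)|; (b) |{y ∈ G_i : x + y ∈ S and x − y ∉ S ∪ (−S)}| = |S_{2i}| − |{s ∈ S_{2i} : x + x ∈ s + (S₀ ∪ (−S₀))}|; (c) |{y ∈ G_j : x − y ∈ S ∪ (−S)}| = |S₄ ∪ (−S₁)|; (d) |{y ∈ G_j : x + y ∈ S and x − y ∉ S ∪ (−S)}| = |S₀| − |{s ∈ S₀ : x + x ∈ s + (S_{2i} ∪ (−S_{−2i}))}|. -/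
open Pointwise

private lemma aux_deg1 {H : Type} [AddCommGroup H] [Fintype H]
    (x : ZMod 5 × H) (b : ZMod 5) (T : Set (ZMod 5 × H))
    (hT : ∀ t ∈ T, x.1 - t.1 = b) :
    {y : ZMod 5 × H | y.1 = b ∧ x - y ∈ T}.ncard = T.ncard := by
  have himg : {y : ZMod 5 × H | y.1 = b ∧ x - y ∈ T} = (fun t => x - t) '' T := by
    ext y
    constructor
    · rintro ⟨hy, ht⟩
      exact ⟨x - y, ht, by simp⟩
    · rintro ⟨t, htT, rfl⟩
      refine ⟨by rw [Prod.fst_sub]; exact hT t htT, by rwa [sub_sub_cancel]⟩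
  rw [himg, Set.ncard_image_of_injective _ sub_right_injective]

private lemma aux_deg2 {H : Type} [AddCommGroup H] [Fintype H]
    (x : ZMod 5 × H) (b : ZMod 5) (A T : Set (ZMod 5 × H))
    (hA : ∀ s ∈ A, s.1 - x.1 = b) :
    ({y : ZMod 5 × H | y.1 = b ∧ x + y ∈ A ∧ x - y ∉ T}.ncard : ℤ)
      = (A.ncard : ℤ) - ({s ∈ A | ∃ u ∈ T, x + x = s + u}.ncard : ℤ) := by
  set B := {s ∈ A | ∃ u ∈ T, x + x = s + u} with hB
  have hBA : B ⊆ A := fun s hs => hs.1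
  have himg : {y : ZMod 5 × H | y.1 = b ∧ x + y ∈ A ∧ x - y ∉ T}
      = (fun s => s - x) '' (A \ B) := by
    ext y
    constructor
    · rintro ⟨hy, h1, h2⟩
      refine ⟨x + y, ⟨h1, fun hmem => h2 ?_⟩, by simp⟩
      obtain ⟨-, u, huT, hu⟩ := hmem
      have hxy : x - y = u := by
        have h : x + y + (x - y) = x + y + u := by rw [← hu]; abel
        exact add_left_cancel h
      rwa [hxy]
    · rintro ⟨s, ⟨hsA, hsB⟩, rfl⟩
      refine ⟨by rw [Prod.fst_sub]; exact hA s hsA, ?_, ?_⟩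
      · have h : x + (s - x) = s := by abel
        rwa [h]
      · intro h
        exact hsB ⟨hsA, x - (s - x), h, by abel⟩
  rw [himg, Set.ncard_image_of_injective _ sub_left_injective,
    Set.ncard_diff hBA,
    Nat.cast_sub (Set.ncard_le_ncard hBA A.toFinite)]

/-- Degree structure of the link graph `L_S[B]` for `G = ℤ/5ℤ × H` with `|H|` odd,
`B = G₂ ∪ G₃` and `S ⊆ G₀ ∪ G₁ ∪ G₄` sum-free: the type-1 and type-2 degrees within
each part `G_i` (`i ∈ {2,3}`) and across the bipartition `(G₂, G₃)`. -/
theorem link_graph_degrees_Z5_times_odd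
    (H : Type) [AddCommGroup H] [Fintype H] (hodd : Odd (Fintype.card H))
    (Ga : ZMod 5 → Set (ZMod 5 × H)) (hGa : ∀ a, Ga a = {p | p.1 = a})
    (S : Set (ZMod 5 × H)) (hSsub : S ⊆ Ga 0 ∪ Ga 1 ∪ Ga 4) (hSF : IsSumFree S)
    (Sa : ZMod 5 → Set (ZMod 5 × H)) (hSa : ∀ a, Sa a = S ∩ Ga a) :
    (∀ x ∈ Ga 2,
      {y ∈ Ga 2 | x - y ∈ Sa 0 ∪ -(Sa 0)}.ncard = (Sa 0 ∪ -(Sa 0)).ncard ∧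
      ({y ∈ Ga 2 | x + y ∈ S ∧ x - y ∉ S ∪ -S}.ncard : ℤ)
        = ((Sa 4).ncard : ℤ)
          - ({s ∈ Sa 4 | ∃ u ∈ Sa 0 ∪ -(Sa 0), x + x = s + u}.ncard : ℤ) ∧
      {y ∈ Ga 3 | x - y ∈ S ∪ -S}.ncard = (Sa 4 ∪ -(Sa 1)).ncard ∧
      ({y ∈ Ga 3 | x + y ∈ S ∧ x - y ∉ S ∪ -S}.ncard : ℤ)
        = ((Sa 0).ncard : ℤ)
          - ({s ∈ Sa 0 | ∃ u ∈ Sa 4 ∪ -(Sa 1), x + x = s + u}.ncard : ℤ)) ∧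
    (∀ x ∈ Ga 3,
      {y ∈ Ga 3 | x - y ∈ Sa 0 ∪ -(Sa 0)}.ncard = (Sa 0 ∪ -(Sa 0)).ncard ∧
      ({y ∈ Ga 3 | x + y ∈ S ∧ x - y ∉ S ∪ -S}.ncard : ℤ)
        = ((Sa 1).ncard : ℤ)
          - ({s ∈ Sa 1 | ∃ u ∈ Sa 0 ∪ -(Sa 0), x + x = s + u}.ncard : ℤ) ∧
      {y ∈ Ga 2 | x - y ∈ S ∪ -S}.ncard = (Sa 4 ∪ -(Sa 1)).ncard ∧
      ({y ∈ Ga 2 | x + y ∈ S ∧ x - y ∉ S ∪ -S}.ncard : ℤ)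
        = ((Sa 0).ncard : ℤ)
          - ({s ∈ Sa 0 | ∃ u ∈ Sa 1 ∪ -(Sa 4), x + x = s + u}.ncard : ℤ)) := by
  have hmemSa : ∀ (z : ZMod 5 × H) (c : ZMod 5), z ∈ Sa c → z.1 = c := by
    intro z c h
    rw [hSa] at h
    have h2 := h.2
    rw [hGa] at h2
    exact h2
  have hS_iff : ∀ (z : ZMod 5 × H) (c : ZMod 5), z.1 = c → (z ∈ S ↔ z ∈ Sa c) := by
    intro z c hz
    rw [hSa]
    exact ⟨fun h => ⟨h, by rw [hGa]; exact hz⟩, fun h => h.1⟩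
  have hSum_iff : ∀ (z : ZMod 5 × H) (c d : ZMod 5), z.1 = c → c + d = 0 →
      (z ∈ S ∪ -S ↔ z ∈ Sa c ∪ -(Sa d)) := by
    intro z c d hz hcd
    have hnz : (-z).1 = d := by
      rw [Prod.fst_neg, hz]
      exact neg_eq_of_add_eq_zero_right hcd
    simp only [Set.mem_union, Set.mem_neg]
    rw [hS_iff z c hz, hS_iff (-z) d hnz]
  have hcoordU : ∀ (c d : ZMod 5), c + d = 0 → ∀ t ∈ Sa c ∪ -(Sa d), t.1 = c := by
    intro c d hcd t ht
    rcases ht with h | h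
    · exact hmemSa t c h
    · have h1 : (-t).1 = d := hmemSa (-t) d (Set.mem_neg.mp h)
      rw [Prod.fst_neg] at h1
      rw [neg_eq_iff_eq_neg.mp h1]
      exact neg_eq_of_add_eq_zero_left hcd
  have ncard_neg : ∀ A : Set (ZMod 5 × H), (-A).ncard = A.ncard := by
    intro A
    rw [← Set.image_neg_eq_neg, Set.ncard_image_of_injective _ neg_injective]
  constructor
  · intro x hx
    rw [hGa] at hx
    replace hx : x.1 = 2 := hx
    refine ⟨?_, ?_, ?_, ?_⟩
    · rw [hGa]
      exact aux_deg1 x 2 _ (fun t ht => by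
        rw [hcoordU 0 0 (by decide) t ht, hx]; decide)
    · have hset : {y ∈ Ga 2 | x + y ∈ S ∧ x - y ∉ S ∪ -S}
          = {y : ZMod 5 × H | y.1 = 2 ∧ x + y ∈ Sa 4 ∧ x - y ∉ Sa 0 ∪ -(Sa 0)} := by
        ext y
        simp only [hGa, Set.mem_setOf_eq]
        refine and_congr_right fun hy => and_congr ?_ (not_congr ?_)
        · exact hS_iff (x + y) 4 (by rw [Prod.fst_add, hx, hy]; decide)
        · exact hSum_iff (x - y) 0 0 (by rw [Prod.fst_sub, hx, hy]; decide) (by decide)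
      rw [hset]
      exact aux_deg2 x 2 (Sa 4) (Sa 0 ∪ -(Sa 0)) (fun s hs => by
        rw [hmemSa s 4 hs, hx]; decide)
    · have hset : {y ∈ Ga 3 | x - y ∈ S ∪ -S}
          = {y : ZMod 5 × H | y.1 = 3 ∧ x - y ∈ Sa 4 ∪ -(Sa 1)} := by
        ext y
        simp only [hGa, Set.mem_setOf_eq]
        exact and_congr_right fun hy =>
          hSum_iff (x - y) 4 1 (by rw [Prod.fst_sub, hx, hy]; decide) (by decide)
      rw [hset]
      exact aux_deg1 x 3 _ (fun t ht => by
        rw [hcoordU 4 1 (by decide) t ht, hx]; decide)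
    · have hset : {y ∈ Ga 3 | x + y ∈ S ∧ x - y ∉ S ∪ -S}
          = {y : ZMod 5 × H | y.1 = 3 ∧ x + y ∈ Sa 0 ∧ x - y ∉ Sa 4 ∪ -(Sa 1)} := by
        ext y
        simp only [hGa, Set.mem_setOf_eq]
        refine and_congr_right fun hy => and_congr ?_ (not_congr ?_)
        · exact hS_iff (x + y) 0 (by rw [Prod.fst_add, hx, hy]; decide)
        · exact hSum_iff (x - y) 4 1 (by rw [Prod.fst_sub, hx, hy]; decide) (by decide)
      rw [hset]
      exact aux_deg2 x 3 (Sa 0) (Sa 4 ∪ -(Sa 1)) (fun s hs => by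
        rw [hmemSa s 0 hs, hx]; decide)
  · intro x hx
    rw [hGa] at hx
    replace hx : x.1 = 3 := hx
    refine ⟨?_, ?_, ?_, ?_⟩
    · rw [hGa]
      exact aux_deg1 x 3 _ (fun t ht => by
        rw [hcoordU 0 0 (by decide) t ht, hx]; decide)
    · have hset : {y ∈ Ga 3 | x + y ∈ S ∧ x - y ∉ S ∪ -S}
          = {y : ZMod 5 × H | y.1 = 3 ∧ x + y ∈ Sa 1 ∧ x - y ∉ Sa 0 ∪ -(Sa 0)} := by
        ext y
        simp only [hGa, Set.mem_setOf_eq]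
        refine and_congr_right fun hy => and_congr ?_ (not_congr ?_)
        · exact hS_iff (x + y) 1 (by rw [Prod.fst_add, hx, hy]; decide)
        · exact hSum_iff (x - y) 0 0 (by rw [Prod.fst_sub, hx, hy]; decide) (by decide)
      rw [hset]
      exact aux_deg2 x 3 (Sa 1) (Sa 0 ∪ -(Sa 0)) (fun s hs => by
        rw [hmemSa s 1 hs, hx]; decide)
    · have hset : {y ∈ Ga 2 | x - y ∈ S ∪ -S}
          = {y : ZMod 5 × H | y.1 = 2 ∧ x - y ∈ Sa 1 ∪ -(Sa 4)} := by
        ext y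
        simp only [hGa, Set.mem_setOf_eq]
        exact and_congr_right fun hy =>
          hSum_iff (x - y) 1 4 (by rw [Prod.fst_sub, hx, hy]; decide) (by decide)
      rw [hset, aux_deg1 x 2 _ (fun t ht => by
        rw [hcoordU 1 4 (by decide) t ht, hx]; decide)]
      have hflip : Sa 4 ∪ -(Sa 1) = -(Sa 1 ∪ -(Sa 4)) := by
        rw [Set.union_neg, neg_neg, Set.union_comm]
      rw [hflip, ncard_neg]
    · have hset : {y ∈ Ga 2 | x + y ∈ S ∧ x - y ∉ S ∪ -S}
          = {y : ZMod 5 × H | y.1 = 2 ∧ x + y ∈ Sa 0 ∧ x - y ∉ Sa 1 ∪ -(Sa 4)} := by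
        ext y
        simp only [hGa, Set.mem_setOf_eq]
        refine and_congr_right fun hy => and_congr ?_ (not_congr ?_)
        · exact hS_iff (x + y) 0 (by rw [Prod.fst_add, hx, hy]; decide)
        · exact hSum_iff (x - y) 1 4 (by rw [Prod.fst_sub, hx, hy]; decide) (by decide)
      rw [hset]
      exact aux_deg2 x 2 (Sa 0) (Sa 1 ∪ -(Sa 4)) (fun s hs => by
        rw [hmemSa s 0 hs, hx]; decide)
end

section
/- Every triangle-free finite simple graph Γ on n vertices has at most 2^{n/2} maximal independent sets, i.e. mis(Γ) ≤ 2^{n/2}. -/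
/-!
Induction on the number of vertices. If `I` is a maximal independent set and `A` is a vertex
set containing all neighbours of `T = I ∩ A`, then `I \ A` is a maximal independent set of
`Γ - A`, and `I` is determined by `T` and `I \ A`; so at most `√2 ^ (n - |A|)` maximal
independent sets have trace `T` on `A`. Branching on one vertex `v` gives the bound:
if `v` is isolated it lies in every maximal independent set; if `v` has a single neighbour
`u`, then `v` or `u` is in `I` (`2 · 2^(-1) ≤ 1`); if `v` has degree at least `3`, then
either `v ∈ I`, which fixes the trace on `N[v]`, or `v ∉ I` (`1/4 + 2^(-1/2) ≤ 1`). Otherwise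
the graph is `2`-regular: with `N(v) = {u, w}` and `N(u) = {v, u'}`, either `v ∈ I`, or
`u ∈ I`, or both `w, u' ∈ I`; triangle-freeness gives `w ≠ u'`, so the last trace is on at
least four vertices (`2 · 2^(-3/2) + 1/4 ≤ 1`).
-/

/-- The number of maximal independent sets of a simple graph. -/
noncomputable def misSG {V : Type*} (Γ : SimpleGraph V) : ℕ :=
  Nat.card {I : Set V // (∀ x ∈ I, ∀ y ∈ I, ¬ Γ.Adj x y) ∧
    ∀ J : Set V, (∀ x ∈ J, ∀ y ∈ J, ¬ Γ.Adj x y) → I ⊆ J → I = J}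

namespace SimpleGraph

variable {V : Type*} (G : SimpleGraph V)

theorem misSG_eq_ncard : misSG G = {I : Set V | Maximal G.IsIndepSet I}.ncard := by
  have hindep (I : Set V) : (∀ x ∈ I, ∀ y ∈ I, ¬ G.Adj x y) ↔ G.IsIndepSet I :=
    ⟨fun h x hx y hy _ => h x hx y hy, fun h x hx y hy hxy => h hx hy hxy.ne hxy⟩
  rw [misSG, ← Nat.card_coe_set_eq]
  congr! 3 with I
  simp only [hindep, Maximal]
  exact and_congr_right fun _ => forall_congr' fun J => imp_congr_right fun _ =>
    ⟨fun h hIJ => (h hIJ).symm.subset, fun h hIJ => (hIJ.antisymm (h hIJ))⟩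

variable {G}

theorem maximal_isIndepSet_iff {I : Set V} :
    Maximal G.IsIndepSet I ↔ G.IsIndepSet I ∧ ∀ x ∉ I, ∃ y ∈ I, G.Adj x y := by
  refine ⟨fun hI => ⟨hI.prop, fun x hx => ?_⟩, fun ⟨hI, hdom⟩ => ⟨hI, fun J hJ hIJ x hxJ => ?_⟩⟩
  · by_contra! h
    have hins : G.IsIndepSet (insert x I) :=
      hI.prop.insert fun y hy _ => ⟨h y hy, fun hyx => h y hy hyx.symm⟩
    exact hx (hI.2 hins (Set.subset_insert x I) (Set.mem_insert x I))
  · by_contra hxI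
    obtain ⟨y, hy, hxy⟩ := hdom x hxI
    exact hJ hxJ (hIJ hy) hxy.ne hxy

theorem IsIndepSet.inter_insert_neighborSet {I : Set V} (hI : G.IsIndepSet I) {v : V}
    (hv : v ∈ I) : I ∩ insert v (G.neighborSet v) = {v} := by
  refine Set.eq_singleton_iff_unique_mem.2 ⟨⟨hv, Set.mem_insert v _⟩, ?_⟩
  rintro x ⟨hx, rfl | hvx⟩
  · rfl
  · exact absurd hvx (hI hv hx hvx.ne)

theorem maximal_isIndepSet_induce_compl {I A T : Set V} (hI : Maximal G.IsIndepSet I)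
    (hIA : I ∩ A = T) (hT : ∀ t ∈ T, G.neighborSet t ⊆ A) :
    Maximal (G.induce Aᶜ).IsIndepSet (Subtype.val ⁻¹' I) := by
  obtain ⟨hindep, hdom⟩ := maximal_isIndepSet_iff.1 hI
  refine maximal_isIndepSet_iff.2
    ⟨fun x hx y hy hxy => hindep hx hy (Subtype.val_injective.ne hxy), fun x hx => ?_⟩
  obtain ⟨y, hy, hxy⟩ := hdom x hx
  have hyA : y ∉ A := fun hyA => x.2 (hT y (hIA ▸ ⟨hy, hyA⟩) hxy.symm)
  exact ⟨⟨y, hyA⟩, hy, hxy⟩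

variable (G) in
def maximalIndepSetsWithTrace (A T : Set V) : Set (Set V) :=
  {I | Maximal G.IsIndepSet I ∧ I ∩ A = T}

section Finite

variable [Finite V]

theorem ncard_maximalIndepSetsWithTrace_le {A T : Set V}
    (hT : ∀ t ∈ T, G.neighborSet t ⊆ A) :
    (G.maximalIndepSetsWithTrace A T).ncard ≤ misSG (G.induce Aᶜ) := by
  rw [misSG_eq_ncard]
  refine Set.ncard_le_ncard_of_injOn (Subtype.val ⁻¹' ·)
    (fun I ⟨hI, hIA⟩ => maximal_isIndepSet_induce_compl hI hIA hT) ?_ (Set.toFinite _)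
  rintro I₁ ⟨-, h₁⟩ I₂ ⟨-, h₂⟩ h
  rw [← Set.inter_union_compl I₁ A, ← Set.inter_union_compl I₂ A, h₁, h₂,
    Set.inter_comm I₁, Set.inter_comm I₂, ← Subtype.preimage_coe_eq_preimage_coe_iff.1 h]

theorem misSG_le_ncard_of_subset {S : Set (Set V)}
    (hS : ∀ I, Maximal G.IsIndepSet I → I ∈ S) : misSG G ≤ S.ncard := by
  rw [misSG_eq_ncard]
  exact Set.ncard_le_ncard hS

theorem sqrt_two_pow_mul_ncard_maximalIndepSetsWithTrace_le
    (ih : ∀ A : Set V, A.Nonempty → (misSG (G.induce Aᶜ) : ℝ) ≤ √2 ^ Aᶜ.ncard)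
    {A T : Set V} (hT : ∀ t ∈ T, G.neighborSet t ⊆ A) (hA : A.Nonempty) {k : ℕ}
    (hk : k ≤ A.ncard) :
    √2 ^ k * (G.maximalIndepSetsWithTrace A T).ncard ≤ √2 ^ Nat.card V :=
  calc √2 ^ k * (G.maximalIndepSetsWithTrace A T).ncard
      ≤ √2 ^ A.ncard * √2 ^ Aᶜ.ncard := by
        gcongr
        · exact Real.one_le_sqrt.2 one_le_two
        · exact (Nat.cast_le.2 (ncard_maximalIndepSetsWithTrace_le hT)).trans (ih A hA)
    _ = √2 ^ Nat.card V := by rw [← pow_add, Set.ncard_add_ncard_compl]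

theorem sqrt_two_pow_mul_ncard_maximalIndepSetsWithTrace_insert_neighborSet_le
    (ih : ∀ A : Set V, A.Nonempty → (misSG (G.induce Aᶜ) : ℝ) ≤ √2 ^ Aᶜ.ncard)
    {v : V} {k : ℕ} (hk : k ≤ (G.neighborSet v).ncard + 1) :
    √2 ^ k * (G.maximalIndepSetsWithTrace (insert v (G.neighborSet v)) {v}).ncard ≤
      √2 ^ Nat.card V := by
  refine sqrt_two_pow_mul_ncard_maximalIndepSetsWithTrace_le ih ?_ (Set.insert_nonempty _ _) ?_
  · rintro t rfl
    exact Set.subset_insert t _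
  · rwa [Set.ncard_insert_of_notMem G.notMem_neighborSet_self]

theorem misSG_le_of_neighborSet_eq_empty
    (ih : ∀ A : Set V, A.Nonempty → (misSG (G.induce Aᶜ) : ℝ) ≤ √2 ^ Aᶜ.ncard)
    {v : V} (hv : G.neighborSet v = ∅) :
    (misSG G : ℝ) ≤ √2 ^ Nat.card V := by
  have hcover : misSG G ≤
      (G.maximalIndepSetsWithTrace (insert v (G.neighborSet v)) {v}).ncard := by
    refine misSG_le_ncard_of_subset fun I hI => ⟨hI, hI.prop.inter_insert_neighborSet ?_⟩
    by_contra hvI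
    obtain ⟨y, -, hvy⟩ := (maximal_isIndepSet_iff.1 hI).2 v hvI
    exact (hv ▸ hvy : y ∈ (∅ : Set V))
  have hpiece := sqrt_two_pow_mul_ncard_maximalIndepSetsWithTrace_insert_neighborSet_le ih
    (v := v) (k := 1) (by omega)
  have h1 : (1 : ℝ) ≤ √2 := Real.one_le_sqrt.2 one_le_two
  rw [pow_one] at hpiece
  have := (Nat.cast_le (α := ℝ)).2 hcover
  nlinarith

theorem misSG_le_of_neighborSet_eq_singleton
    (ih : ∀ A : Set V, A.Nonempty → (misSG (G.induce Aᶜ) : ℝ) ≤ √2 ^ Aᶜ.ncard)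
    {v u : V} (hv : G.neighborSet v = {u}) :
    (misSG G : ℝ) ≤ √2 ^ Nat.card V := by
  have hvu : G.Adj v u := (hv ▸ rfl : u ∈ G.neighborSet v)
  have hcover : misSG G ≤
      (G.maximalIndepSetsWithTrace (insert v (G.neighborSet v)) {v}).ncard +
      (G.maximalIndepSetsWithTrace (insert u (G.neighborSet u)) {u}).ncard := by
    refine (misSG_le_ncard_of_subset fun I hI => ?_).trans (Set.ncard_union_le _ _)
    by_cases hvI : v ∈ I
    · exact Or.inl ⟨hI, hI.prop.inter_insert_neighborSet hvI⟩
    · obtain ⟨y, hyI, hvy⟩ := (maximal_isIndepSet_iff.1 hI).2 v hvI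
      obtain rfl : y = u := (hv ▸ hvy : y ∈ ({u} : Set V))
      exact Or.inr ⟨hI, hI.prop.inter_insert_neighborSet hyI⟩
  have hdeg_u : 0 < (G.neighborSet u).ncard := (Set.ncard_pos).2 ⟨v, hvu.symm⟩
  have hpiece_v := sqrt_two_pow_mul_ncard_maximalIndepSetsWithTrace_insert_neighborSet_le ih
    (v := v) (k := 2) (by simp [hv])
  have hpiece_u := sqrt_two_pow_mul_ncard_maximalIndepSetsWithTrace_insert_neighborSet_le ih
    (v := u) (k := 2) (by omega)
  rw [Real.sq_sqrt zero_le_two] at hpiece_v hpiece_u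
  have := (Nat.cast_le (α := ℝ)).2 hcover
  push_cast at this
  linarith

theorem misSG_le_of_three_le_ncard_neighborSet
    (ih : ∀ A : Set V, A.Nonempty → (misSG (G.induce Aᶜ) : ℝ) ≤ √2 ^ Aᶜ.ncard)
    {v : V} (hv : 3 ≤ (G.neighborSet v).ncard) :
    (misSG G : ℝ) ≤ √2 ^ Nat.card V := by
  have hcover : misSG G ≤
      (G.maximalIndepSetsWithTrace (insert v (G.neighborSet v)) {v}).ncard +
      (G.maximalIndepSetsWithTrace {v} ∅).ncard := by
    refine (misSG_le_ncard_of_subset fun I hI => ?_).trans (Set.ncard_union_le _ _)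
    by_cases hvI : v ∈ I
    · exact Or.inl ⟨hI, hI.prop.inter_insert_neighborSet hvI⟩
    · exact Or.inr ⟨hI, Set.inter_singleton_eq_empty.2 hvI⟩
  have hpiece_in := sqrt_two_pow_mul_ncard_maximalIndepSetsWithTrace_insert_neighborSet_le ih
    (v := v) (k := 4) (by omega)
  have hpiece_out := sqrt_two_pow_mul_ncard_maximalIndepSetsWithTrace_le ih
    (A := {v}) (T := ∅) (by simp) (Set.singleton_nonempty v) (k := 1) (by simp)
  -- `1/4 + 1/√2 ≤ 1` because `√2 ≥ 4/3`
  have hsqrt : (4 / 3 : ℝ) ≤ √2 := Real.le_sqrt_of_sq_le (by norm_num)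
  rw [show √2 ^ 4 = (√2 ^ 2) ^ 2 by ring, Real.sq_sqrt zero_le_two] at hpiece_in
  rw [pow_one] at hpiece_out
  have := (Nat.cast_le (α := ℝ)).2 hcover
  push_cast at this
  nlinarith

theorem four_le_ncard_union_insert_neighborSet {v u w u' : V}
    (hv : G.neighborSet v = {u, w}) (hu : G.neighborSet u = {v, u'})
    (huw : u ≠ w) (hu'v : u' ≠ v) (hnadj : ¬ G.Adj u w) :
    4 ≤ (insert w (G.neighborSet w) ∪ insert u' (G.neighborSet u')).ncard := by
  have hvu : G.Adj v u := (hv ▸ Or.inl rfl : u ∈ G.neighborSet v)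
  have hvw : G.Adj v w := (hv ▸ Or.inr rfl : w ∈ G.neighborSet v)
  have huu' : G.Adj u u' := (hu ▸ Or.inr rfl : u' ∈ G.neighborSet u)
  have hwu' : w ≠ u' := by rintro rfl; exact hnadj huu'
  have hsub : ({u, v, w, u'} : Set V) ⊆
      insert w (G.neighborSet w) ∪ insert u' (G.neighborSet u') := by
    rintro x (rfl | rfl | rfl | rfl)
    exacts [Or.inr (Or.inr huu'.symm), Or.inl (Or.inr hvw.symm), Or.inl (Or.inl rfl),
      Or.inr (Or.inl rfl)]
  refine le_of_eq_of_le ?_ (Set.ncard_le_ncard hsub)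
  rw [Set.ncard_insert_of_notMem,
    Set.ncard_eq_three.2 ⟨v, w, u', hvw.ne, hu'v.symm, hwu', rfl⟩]
  simp only [Set.mem_insert_iff, Set.mem_singleton_iff, not_or]
  exact ⟨hvu.ne.symm, huw, huu'.ne⟩

theorem misSG_le_of_neighborSet_eq_pair
    (ih : ∀ A : Set V, A.Nonempty → (misSG (G.induce Aᶜ) : ℝ) ≤ √2 ^ Aᶜ.ncard)
    {v u w u' : V} (hv : G.neighborSet v = {u, w}) (hu : G.neighborSet u = {v, u'})
    (huw : u ≠ w) (hu'v : u' ≠ v) (hnadj : ¬ G.Adj u w) :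
    (misSG G : ℝ) ≤ √2 ^ Nat.card V := by
  have hcover : misSG G ≤
      (G.maximalIndepSetsWithTrace (insert v (G.neighborSet v)) {v}).ncard +
      (G.maximalIndepSetsWithTrace (insert u (G.neighborSet u)) {u}).ncard +
      (G.maximalIndepSetsWithTrace
        (insert w (G.neighborSet w) ∪ insert u' (G.neighborSet u')) {w, u'}).ncard := by
    refine (misSG_le_ncard_of_subset fun I hI => ?_).trans
      ((Set.ncard_union_le _ _).trans (add_le_add_left (Set.ncard_union_le _ _) _))
    obtain ⟨hindep, hdom⟩ := maximal_isIndepSet_iff.1 hI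
    by_cases hvI : v ∈ I
    · exact Or.inl (Or.inl ⟨hI, hindep.inter_insert_neighborSet hvI⟩)
    by_cases huI : u ∈ I
    · exact Or.inl (Or.inr ⟨hI, hindep.inter_insert_neighborSet huI⟩)
    have hwI : w ∈ I := by
      obtain ⟨y, hyI, hvy⟩ := hdom v hvI
      obtain rfl | rfl := (hv ▸ hvy : y ∈ ({u, w} : Set V))
      exacts [absurd hyI huI, hyI]
    have hu'I : u' ∈ I := by
      obtain ⟨y, hyI, huy⟩ := hdom u huI
      obtain rfl | rfl := (hu ▸ huy : y ∈ ({v, u'} : Set V))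
      exacts [absurd hyI hvI, hyI]
    refine Or.inr ⟨hI, ?_⟩
    rw [Set.inter_union_distrib_left, hindep.inter_insert_neighborSet hwI,
      hindep.inter_insert_neighborSet hu'I, Set.singleton_union]
  have hpiece_v := sqrt_two_pow_mul_ncard_maximalIndepSetsWithTrace_insert_neighborSet_le ih
    (v := v) (k := 3) (by rw [hv, Set.ncard_pair huw])
  have hpiece_u := sqrt_two_pow_mul_ncard_maximalIndepSetsWithTrace_insert_neighborSet_le ih
    (v := u) (k := 3) (by rw [hu, Set.ncard_pair hu'v.symm])
  have hpiece_wu' := sqrt_two_pow_mul_ncard_maximalIndepSetsWithTrace_le ih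
    (T := {w, u'})
    (by
      rintro t (rfl | rfl)
      exacts [Set.subset_union_of_subset_left (Set.subset_insert _ _) _,
        Set.subset_union_of_subset_right (Set.subset_insert _ _) _])
    ⟨w, Or.inl (Set.mem_insert w _)⟩
    (four_le_ncard_union_insert_neighborSet hv hu huw hu'v hnadj)
  -- `2 / (2√2) + 1/4 ≤ 1` because `√2 ≥ 4/3`
  have hsqrt : (4 / 3 : ℝ) ≤ √2 := Real.le_sqrt_of_sq_le (by norm_num)
  have h3 : √2 ^ 3 = 2 * √2 := by rw [pow_succ, Real.sq_sqrt zero_le_two]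
  rw [h3] at hpiece_v hpiece_u
  rw [show √2 ^ 4 = (√2 ^ 2) ^ 2 by ring, Real.sq_sqrt zero_le_two] at hpiece_wu'
  have := (Nat.cast_le (α := ℝ)).2 hcover
  push_cast at this
  nlinarith

theorem misSG_le_of_forall_ncard_neighborSet_eq_two (hG : G.CliqueFree 3)
    (ih : ∀ A : Set V, A.Nonempty → (misSG (G.induce Aᶜ) : ℝ) ≤ √2 ^ Aᶜ.ncard)
    (hdeg : ∀ x, (G.neighborSet x).ncard = 2) (v : V) :
    (misSG G : ℝ) ≤ √2 ^ Nat.card V := by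
  obtain ⟨u, w, huw, hv⟩ := Set.ncard_eq_two.1 (hdeg v)
  have hvu : v ∈ G.neighborSet u := G.adj_symm (hv ▸ Or.inl rfl : u ∈ G.neighborSet v)
  obtain ⟨u', hu'⟩ := Set.ncard_eq_one.1 <| by
    rw [Set.ncard_sdiff_singleton_of_mem hvu, hdeg u]
  have hu'v : u' ≠ v := (hu' ▸ Set.mem_singleton u' : u' ∈ G.neighborSet u \ {v}).2
  have hu : G.neighborSet u = {v, u'} := by
    rw [← hu', Set.insert_sdiff_singleton, Set.insert_eq_of_mem hvu]
  have hnadj : ¬ G.Adj u w := isIndepSet_neighborSet_of_triangleFree G hG v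
    (hv ▸ Or.inl rfl) (hv ▸ Or.inr rfl) huw
  exact misSG_le_of_neighborSet_eq_pair ih hv hu huw hu'v hnadj

theorem misSG_le_sqrt_two_pow (hG : G.CliqueFree 3) :
    (misSG G : ℝ) ≤ √2 ^ Nat.card V := by
  induction hn : Nat.card V using Nat.strong_induction_on generalizing V with
  | _ n IH =>
  subst hn
  have ih : ∀ A : Set V, A.Nonempty → (misSG (G.induce Aᶜ) : ℝ) ≤ √2 ^ Aᶜ.ncard := by
    intro A hA
    refine IH _ ?_ (hG.comap ⟨(Embedding.induce Aᶜ).toCopy⟩) (Nat.card_coe_set_eq _)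
    rw [← Set.ncard_add_ncard_compl A]
    have := (Set.ncard_pos).2 hA
    omega
  rcases isEmpty_or_nonempty V with hV | ⟨⟨v⟩⟩
  · rw [Nat.card_of_isEmpty, pow_zero, misSG_eq_ncard]
    exact_mod_cast Set.ncard_le_one_of_subsingleton _
  by_cases hdeg : ∀ x, (G.neighborSet x).ncard = 2
  · exact misSG_le_of_forall_ncard_neighborSet_eq_two hG ih hdeg v
  obtain ⟨x, hx⟩ := not_forall.1 hdeg
  obtain hx | hx | hx : (G.neighborSet x).ncard = 0 ∨ (G.neighborSet x).ncard = 1 ∨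
    3 ≤ (G.neighborSet x).ncard := by omega
  · exact misSG_le_of_neighborSet_eq_empty ih ((Set.ncard_eq_zero).1 hx)
  · obtain ⟨u, hu⟩ := Set.ncard_eq_one.1 hx
    exact misSG_le_of_neighborSet_eq_singleton ih hu
  · exact misSG_le_of_three_le_ncard_neighborSet ih hx

end Finite

end SimpleGraph

/-- Hujter–Tuza: a triangle-free finite simple graph on `n` vertices has at most
`2 ^ (n/2)` maximal independent sets. -/
theorem hujter_tuza (V : Type) [Fintype V] (Γ : SimpleGraph V)
    (htri : Γ.CliqueFree 3) :
    (misSG Γ : ℝ) ≤ 2 ^ ((Fintype.card V : ℝ) / 2) := by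
  rw [Real.rpow_div_two_eq_sqrt _ zero_le_two, Real.rpow_natCast, ← Nat.card_eq_fintype_card]
  exact Γ.misSG_le_sqrt_two_pow htri
end
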